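/- arXiv:2107.13225 — 9 statements merged into one kernel-verified Lean document; each statement's English description precedes it below -/
import Mathlib

section
/- Let τ > 0 and 0 < a < b ≤ e. Define y(x) = (1 + τ b^x)/(1 + τ a^x). Then the function y is increasing on [-1,0); consequently (1 + τ b^{-p₁})/(1 + τ a^{-p₁}) > (1 + τ b^{-p₂})/(1 + τ a^{-p₂}) whenever 0 < p₁ < p₂ ≤ 1. -/
open Real Set

/-- The map `t ↦ t^x * log t` is strictly increasing on `(0, e]` when `x ∈ [-1, 0)`. -/
lemma aux_g_mono {x : ℝ} (hx : x ∈ Set.Ico (-1 : ℝ) 0) :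
    StrictMonoOn (fun t : ℝ => t ^ x * Real.log t) (Set.Ioc 0 (Real.exp 1)) := by
  obtain ⟨hx1, hx0⟩ := hx
  apply strictMonoOn_of_deriv_pos (convex_Ioc _ _)
  · apply ContinuousOn.mul
    · exact fun t ht =>
        (Real.continuousAt_rpow_const _ _ (Or.inl (ne_of_gt ht.1))).continuousWithinAt
    · exact fun t ht => (Real.continuousAt_log (ne_of_gt ht.1)).continuousWithinAt
  · intro t ht
    rw [interior_Ioc] at ht
    obtain ⟨ht0, hte⟩ := ht
    have hd : HasDerivAt (fun t : ℝ => t ^ x * Real.log t)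
        (x * t ^ (x - 1) * Real.log t + t ^ x * t⁻¹) t :=
      (Real.hasDerivAt_rpow_const (Or.inl ht0.ne')).mul (Real.hasDerivAt_log ht0.ne')
    rw [hd.deriv]
    have h1 : t ^ x * t⁻¹ = t ^ (x - 1) := by
      rw [Real.rpow_sub ht0, Real.rpow_one, div_eq_mul_inv]
    have ht1 : (0 : ℝ) < t ^ (x - 1) := Real.rpow_pos_of_pos ht0 _
    have hlog1 : Real.log t < 1 := by
      have := Real.log_lt_log ht0 hte
      rwa [Real.log_exp] at this
    have key : 0 < x * Real.log t + 1 := by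
      rcases le_or_gt 0 (Real.log t) with h | h
      · nlinarith [mul_nonneg (by linarith : (0:ℝ) ≤ x + 1) h]
      · nlinarith [mul_pos_of_neg_of_neg hx0 h]
    calc (0:ℝ) < t ^ (x - 1) * (x * Real.log t + 1) := mul_pos ht1 key
      _ = x * t ^ (x - 1) * Real.log t + t ^ x * t⁻¹ := by rw [h1]; ring

/-- Proposition 1: for WENO weight ratios y(x) = (1+τ b^x)/(1+τ a^x) with τ > 0 and
0 < a < b ≤ e, y is strictly increasing on [-1,0); consequently the ratio with the
smaller exponent p is larger. -/
theorem stmt0 (τ a b : ℝ) (hτ : 0 < τ) (ha : 0 < a) (hab : a < b)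
    (hbe : b ≤ Real.exp 1) :
    StrictMonoOn (fun x : ℝ => (1 + τ * b ^ x) / (1 + τ * a ^ x)) (Set.Ico (-1 : ℝ) 0) ∧
    ∀ p₁ p₂ : ℝ, 0 < p₁ → p₁ < p₂ → p₂ ≤ 1 →
      (1 + τ * b ^ (-p₂)) / (1 + τ * a ^ (-p₂)) <
        (1 + τ * b ^ (-p₁)) / (1 + τ * a ^ (-p₁)) := by
  have hb : 0 < b := ha.trans hab
  have hden : ∀ x : ℝ, 0 < 1 + τ * a ^ x := fun x => by
    have := Real.rpow_pos_of_pos ha x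
    nlinarith
  have hmono : StrictMonoOn (fun x : ℝ => (1 + τ * b ^ x) / (1 + τ * a ^ x))
      (Set.Ico (-1 : ℝ) 0) := by
    apply strictMonoOn_of_deriv_pos (convex_Ico _ _)
    · apply ContinuousOn.div
      · exact fun x _ => ((((Real.hasStrictDerivAt_const_rpow hb x).hasDerivAt).const_mul
          τ).const_add 1).continuousAt.continuousWithinAt
      · exact fun x _ => ((((Real.hasStrictDerivAt_const_rpow ha x).hasDerivAt).const_mul
          τ).const_add 1).continuousAt.continuousWithinAt
      · exact fun x _ => (hden x).ne'
    · intro x hx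
      rw [interior_Ico] at hx
      have hxI : x ∈ Set.Ico (-1 : ℝ) 0 := ⟨hx.1.le, hx.2⟩
      have hb' : HasDerivAt (fun x : ℝ => 1 + τ * b ^ x) (τ * (b ^ x * Real.log b)) x :=
        (((Real.hasStrictDerivAt_const_rpow hb x).hasDerivAt).const_mul τ).const_add 1
      have ha' : HasDerivAt (fun x : ℝ => 1 + τ * a ^ x) (τ * (a ^ x * Real.log a)) x :=
        (((Real.hasStrictDerivAt_const_rpow ha x).hasDerivAt).const_mul τ).const_add 1
      have hf := hb'.div ha' (hden x).ne'
      rw [show (fun x : ℝ => (1 + τ * b ^ x) / (1 + τ * a ^ x)) =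
          ((fun x : ℝ => 1 + τ * b ^ x) / fun x : ℝ => 1 + τ * a ^ x) from rfl, hf.deriv]
      have hapos : (0 : ℝ) < a ^ x := Real.rpow_pos_of_pos ha x
      have hbpos : (0 : ℝ) < b ^ x := Real.rpow_pos_of_pos hb x
      have hkey : a ^ x * Real.log a < b ^ x * Real.log b :=
        aux_g_mono hxI ⟨ha, hab.le.trans hbe⟩ ⟨hb, hbe⟩ hab
      have hlog : Real.log a < Real.log b := Real.log_lt_log ha hab
      have hnum : 0 < τ * (b ^ x * Real.log b) * (1 + τ * a ^ x) -
          (1 + τ * b ^ x) * (τ * (a ^ x * Real.log a)) := by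
        have h2 : 0 < τ * τ * (a ^ x * b ^ x) * (Real.log b - Real.log a) :=
          mul_pos (mul_pos (mul_pos hτ hτ) (mul_pos hapos hbpos)) (sub_pos.2 hlog)
        nlinarith
      exact div_pos hnum (by positivity)
  refine ⟨hmono, fun p₁ p₂ hp₁ h12 hp₂ => ?_⟩
  exact hmono ⟨by linarith, by linarith⟩ ⟨by linarith, by linarith⟩ (by linarith)
end

section
/- Let f be smooth and let β₀ = (f(x_j) - f(x_{j-1}))², β₁ = (f(x_{j+1}) - f(x_j))², where x_{j±1} = x_j ± Δx. Suppose f has a first-order critical point at x_c = x_j + λΔx with f'(x_c) = 0 and f''(x_c) ≠ 0, λ ∈ (-1,1). Then β₀ = (1/4)(2λ+1)² f''(x_c)² Δx⁴ + O(Δx⁵) and β₁ = (1/4)(2λ-1)² f''(x_c)² Δx⁴ + O(Δx⁵). In particular, the leading Δx⁴ coefficient of β₁ vanishes exactly when λ = 1/2 and that of β₀ vanishes exactly when λ = -1/2. -/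
open Set

lemma idw_eq (g : ℝ → ℝ) (hg : ContDiff ℝ (⊤ : ℕ∞) g) {s : Set ℝ} (hs : UniqueDiffOn ℝ s)
    {x : ℝ} (hx : x ∈ s) (n : ℕ) : iteratedDerivWithin n g s x = iteratedDeriv n g x := by
  have hg' : ContDiff ℝ ((⊤:ℕ∞) : WithTop ℕ∞) g := hg.of_le (by simp)
  have H : HasFTaylorSeriesUpTo (⊤:ℕ∞) g (ftaylorSeries ℝ g) := contDiff_iff_ftaylorSeries.mp hg'
  have hmn : (n : WithTop ℕ∞) ≤ ((⊤:ℕ∞) : WithTop ℕ∞) := by exact_mod_cast le_top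
  have := (H.hasFTaylorSeriesUpToOn s).eq_iteratedFDerivWithin_of_uniqueDiffOn (m := n) hmn hs hx
  rw [iteratedDerivWithin_eq_iteratedFDerivWithin, iteratedDeriv_eq_iteratedFDeriv, ← this]
  rfl

lemma oneSide (g : ℝ → ℝ) (hg : ContDiff ℝ (⊤ : ℕ∞) g) (a : ℝ) (h1 : deriv g a = 0) :
    ∃ C > 0, ∀ t : ℝ, 0 ≤ t → t ≤ 1 →
      |g (a + t) - g a - (1/2) * iteratedDeriv 2 g a * t^2| ≤ C * t^3 := by
  have hab : a ≤ a + 1 := by linarith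
  obtain ⟨C, hC⟩ := exists_taylor_mean_remainder_bound (n := 2) hab
    ((hg.of_le (WithTop.coe_le_coe.mpr (le_top : ((2+1 : ℕ) : ℕ∞) ≤ ⊤))).contDiffOn : ContDiffOn ℝ (2+1) g (Icc a (a+1)))
  refine ⟨max C 1, lt_max_of_lt_right one_pos, fun t ht0 ht1 => ?_⟩
  have hx : a + t ∈ Icc a (a+1) := ⟨by linarith, by linarith⟩
  have hT := hC (a + t) hx
  have hU : UniqueDiffOn ℝ (Icc a (a+1)) := uniqueDiffOn_Icc (by linarith)
  have hmem : a ∈ Icc a (a+1) := left_mem_Icc.mpr hab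
  rw [taylor_within_apply] at hT
  have e0 := idw_eq g hg hU hmem 0
  have e1 := idw_eq g hg hU hmem 1
  have e2 := idw_eq g hg hU hmem 2
  rw [iteratedDeriv_zero] at e0
  rw [iteratedDeriv_one] at e1
  simp only [Finset.sum_range_succ, Finset.sum_range_zero, e0, e1, e2, h1] at hT
  have heq : (a + t) - a = t := by ring
  rw [heq] at hT
  simp only [smul_eq_mul, Real.norm_eq_abs] at hT
  norm_num at hT
  have heq2 : g (a + t) - g a - (1/2) * iteratedDeriv 2 g a * t^2
      = g (a + t) - (g a + 1/2*t^2*iteratedDeriv 2 g a) := by ring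
  rw [heq2]
  refine hT.trans ?_
  have ht3 : 0 ≤ t ^ 3 := by positivity
  exact mul_le_mul_of_nonneg_right (le_max_left _ _) ht3

lemma lemA (f : ℝ → ℝ) (hf : ContDiff ℝ (⊤ : ℕ∞) f) (xc : ℝ) (h1 : deriv f xc = 0) :
    ∃ C > 0, ∀ t : ℝ, |t| ≤ 1 →
      |f (xc + t) - f xc - (1/2) * iteratedDeriv 2 f xc * t^2| ≤ C * |t|^3 := by
  obtain ⟨C₁, hC₁, hR⟩ := oneSide f hf xc h1
  set gneg : ℝ → ℝ := fun x => f (2*xc - x) with hgneg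
  have hgc : ContDiff ℝ (⊤ : ℕ∞) gneg := hf.comp (contDiff_const.sub contDiff_id)
  have key : ∀ n x, iteratedDeriv n gneg x = (-1:ℝ)^n * iteratedDeriv n f (2*xc - x) := by
    intro n x
    have step1 : iteratedDeriv n (fun z => f (-(z + -(2*xc)))) x
        = iteratedDeriv n (fun y => f (-y)) (x + -(2*xc)) :=
      congrFun (iteratedDeriv_comp_add_const n (fun y => f (-y)) (-(2*xc))) x
    have h1' : gneg = fun z => f (-(z + -(2*xc))) := by
      funext z; simp only [hgneg]; congr 1; ring
    rw [h1', step1, iteratedDeriv_comp_neg]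
    simp only [smul_eq_mul]
    congr 2
    ring
  have hd1 : deriv gneg xc = 0 := by
    have := key 1 xc
    rw [iteratedDeriv_one] at this
    rw [this]
    have : (2*xc - xc) = xc := by ring
    rw [this, iteratedDeriv_one, h1]; ring
  have hd2 : iteratedDeriv 2 gneg xc = iteratedDeriv 2 f xc := by
    rw [key 2 xc]
    have : (2*xc - xc) = xc := by ring
    rw [this]; ring
  obtain ⟨C₂, hC₂, hL⟩ := oneSide gneg hgc xc hd1
  refine ⟨max C₁ C₂, lt_max_of_lt_left hC₁, fun t ht => ?_⟩
  rcases le_or_gt 0 t with htp | htn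
  · rw [abs_of_nonneg htp] at ht ⊢
    exact (hR t htp ht).trans (by nlinarith [pow_nonneg htp 3, le_max_left C₁ C₂])
  · rw [abs_of_neg htn] at ht ⊢
    have h0 : 0 ≤ -t := by linarith
    have := hL (-t) h0 ht
    have harg : gneg (xc + -t) = f (xc + t) := by simp only [hgneg]; congr 1; ring
    rw [harg, hd2] at this
    have heq : f (xc + t) - f xc - 1 / 2 * iteratedDeriv 2 f xc * t ^ 2
        = f (xc + t) - gneg xc - 1 / 2 * iteratedDeriv 2 f xc * (-t) ^ 2 := by
      simp only [hgneg]
      have : (2*xc - xc) = xc := by ring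
      rw [this]; ring
    rw [heq]
    exact this.trans (by nlinarith [pow_nonneg h0 3, le_max_right C₁ C₂])

lemma quadSq (g : ℝ → ℝ) (c C : ℝ) (hC : 0 < C)
    (hg : ∀ t : ℝ, |t| ≤ 1 → |g t - c * t ^ 2| ≤ C * |t| ^ 3)
    (u v : ℝ) (hu : |u| ≤ 2) (hv : |v| ≤ 2) :
    ∀ h : ℝ, 0 < h → h < 1/2 →
      |(g (u * h) - g (v * h)) ^ 2 - c ^ 2 * (u ^ 2 - v ^ 2) ^ 2 * h ^ 4|
        ≤ (256 * C * (C + |c|)) * h ^ 5 := by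
  intro h h0 hhalf
  have habs : |h| = h := abs_of_pos h0
  have hu0 : 0 ≤ |u| := abs_nonneg u
  have hv0 : 0 ≤ |v| := abs_nonneg v
  have hc0 : 0 ≤ |c| := abs_nonneg c
  have hu1 : |u * h| ≤ 1 := by rw [abs_mul, habs]; nlinarith
  have hv1 : |v * h| ≤ 1 := by rw [abs_mul, habs]; nlinarith
  have ha := hg (u * h) hu1
  have hb := hg (v * h) hv1
  set a := g (u * h) - c * (u * h) ^ 2 with ha_def
  set b := g (v * h) - c * (v * h) ^ 2 with hb_def
  have ha' : |a| ≤ 8 * C * h ^ 3 := by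
    refine ha.trans ?_
    rw [abs_mul, habs]
    have h3 : (|u| * h) ^ 3 ≤ 8 * h ^ 3 := by
      nlinarith [mul_le_mul_of_nonneg_right (pow_le_pow_left₀ hu0 hu 3) (pow_nonneg h0.le 3)]
    nlinarith
  have hb' : |b| ≤ 8 * C * h ^ 3 := by
    refine hb.trans ?_
    rw [abs_mul, habs]
    have h3 : (|v| * h) ^ 3 ≤ 8 * h ^ 3 := by
      nlinarith [mul_le_mul_of_nonneg_right (pow_le_pow_left₀ hv0 hv 3) (pow_nonneg h0.le 3)]
    nlinarith
  have hab : |a - b| ≤ 16 * C * h ^ 3 := by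
    calc |a - b| ≤ |a| + |b| := abs_sub _ _
      _ ≤ 16 * C * h ^ 3 := by linarith
  have hK : |u ^ 2 - v ^ 2| ≤ 8 := by
    calc |u ^ 2 - v ^ 2| ≤ |u ^ 2| + |v ^ 2| := abs_sub _ _
      _ = |u| ^ 2 + |v| ^ 2 := by rw [abs_pow, abs_pow]
      _ ≤ 8 := by nlinarith
  have hDe : g (u * h) - g (v * h) = (a - b) + c * (u ^ 2 - v ^ 2) * h ^ 2 := by
    rw [ha_def, hb_def]; ring
  rw [hDe]
  have expand : ((a - b) + c * (u ^ 2 - v ^ 2) * h ^ 2) ^ 2 - c ^ 2 * (u ^ 2 - v ^ 2) ^ 2 * h ^ 4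
      = (a - b) ^ 2 + 2 * (a - b) * (c * (u ^ 2 - v ^ 2) * h ^ 2) := by ring
  rw [expand]
  have t1 : |(a - b) ^ 2 + 2 * (a - b) * (c * (u ^ 2 - v ^ 2) * h ^ 2)|
      ≤ |a - b| ^ 2 + 2 * |a - b| * (|c| * |u ^ 2 - v ^ 2| * h ^ 2) := by
    calc _ ≤ |(a - b) ^ 2| + |2 * (a - b) * (c * (u ^ 2 - v ^ 2) * h ^ 2)| := abs_add_le _ _
      _ = |a - b| ^ 2 + 2 * |a - b| * (|c| * |u ^ 2 - v ^ 2| * |h| ^ 2) := by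
          rw [abs_pow, abs_mul, abs_mul, abs_mul, abs_mul, abs_pow]
          norm_num
      _ = |a - b| ^ 2 + 2 * |a - b| * (|c| * |u ^ 2 - v ^ 2| * h ^ 2) := by rw [habs]
  refine t1.trans ?_
  have habn : 0 ≤ |a - b| := abs_nonneg _
  have hKn : 0 ≤ |u ^ 2 - v ^ 2| := abs_nonneg _
  have hsq : |a - b| ^ 2 ≤ (16 * C * h ^ 3) ^ 2 := pow_le_pow_left₀ habn hab 2
  have hcross : 2 * |a - b| * (|c| * |u ^ 2 - v ^ 2| * h ^ 2)
      ≤ 2 * (16 * C * h ^ 3) * (|c| * 8 * h ^ 2) := by gcongr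
  have h6 : h ^ 6 ≤ h ^ 5 := by
    have := pow_le_pow_of_le_one h0.le (by linarith : h ≤ 1) (by norm_num : 5 ≤ 6)
    linarith
  have e : (16 * C * h ^ 3) ^ 2 + 2 * (16 * C * h ^ 3) * (|c| * 8 * h ^ 2)
      = 256 * C * C * h ^ 6 + 256 * C * |c| * h ^ 5 := by ring
  have e2 : (256 * C * (C + |c|)) * h ^ 5 = 256 * C * C * h ^ 5 + 256 * C * |c| * h ^ 5 := by ring
  have h66 : 256 * C * C * h ^ 6 ≤ 256 * C * C * h ^ 5 :=
    mul_le_mul_of_nonneg_left h6 (by positivity)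
  linarith

/-- Taylor expansions of the WENO3-JS smoothness indicators β₀, β₁ about a
first-order critical point x_c = x_j + λΔx inside the interval, with
x_j = x_c − λΔx and f_k = f(x_j + kΔx). -/
theorem stmt5 (f : ℝ → ℝ) (hf : ContDiff ℝ (⊤ : ℕ∞) f) (xc lam : ℝ)
    (hlam : lam ∈ Set.Ioo (-1 : ℝ) 1)
    (h1 : deriv f xc = 0) (h2 : iteratedDeriv 2 f xc ≠ 0) :
    (∃ C > 0, ∃ δ > 0, ∀ h : ℝ, 0 < h → h < δ →
      |(f (xc - lam * h) - f (xc - lam * h - h)) ^ 2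
        - (1 / 4) * (2 * lam + 1) ^ 2 * (iteratedDeriv 2 f xc) ^ 2 * h ^ 4| ≤ C * h ^ 5) ∧
    (∃ C > 0, ∃ δ > 0, ∀ h : ℝ, 0 < h → h < δ →
      |(f (xc - lam * h + h) - f (xc - lam * h)) ^ 2
        - (1 / 4) * (2 * lam - 1) ^ 2 * (iteratedDeriv 2 f xc) ^ 2 * h ^ 4| ≤ C * h ^ 5) ∧
    ((1 / 4) * (2 * lam - 1) ^ 2 * (iteratedDeriv 2 f xc) ^ 2 = 0 ↔ lam = 1 / 2) ∧
    ((1 / 4) * (2 * lam + 1) ^ 2 * (iteratedDeriv 2 f xc) ^ 2 = 0 ↔ lam = -(1 / 2)) := by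
  obtain ⟨hl1, hl2⟩ := hlam
  obtain ⟨C, hC, hbound⟩ := lemA f hf xc h1
  set D := iteratedDeriv 2 f xc with hD
  set c : ℝ := (1/2) * D with hc
  set g : ℝ → ℝ := fun t => f (xc + t) - f xc with hgdef
  have hg : ∀ t : ℝ, |t| ≤ 1 → |g t - c * t ^ 2| ≤ C * |t| ^ 3 := by
    intro t ht
    exact hbound t ht
  have Kpos : 0 < 256 * C * (C + |c|) := by positivity
  refine ⟨?_, ?_, ?_, ?_⟩
  · -- β₀
    have hu : |(-lam : ℝ)| ≤ 2 := by rw [abs_neg]; rw [abs_le]; constructor <;> linarith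
    have hv : |(-lam - 1 : ℝ)| ≤ 2 := by rw [abs_le]; constructor <;> linarith
    refine ⟨256 * C * (C + |c|), Kpos, 1/2, by norm_num, fun h h0 hδ => ?_⟩
    have key := quadSq g c C hC hg (-lam) (-lam - 1) hu hv h h0 hδ
    have e1 : g ((-lam) * h) - g ((-lam - 1) * h)
        = f (xc - lam * h) - f (xc - lam * h - h) := by
      simp only [hgdef]
      have a1 : xc + (-lam) * h = xc - lam * h := by ring
      have a2 : xc + (-lam - 1) * h = xc - lam * h - h := by ring
      rw [a1, a2]; ring
    have e2 : c ^ 2 * ((-lam) ^ 2 - (-lam - 1) ^ 2) ^ 2 * h ^ 4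
        = (1/4) * (2 * lam + 1) ^ 2 * D ^ 2 * h ^ 4 := by
      simp only [hc]; ring
    rw [e1, e2] at key
    exact key
  · -- β₁
    have hu : |(-lam + 1 : ℝ)| ≤ 2 := by rw [abs_le]; constructor <;> linarith
    have hv : |(-lam : ℝ)| ≤ 2 := by rw [abs_neg]; rw [abs_le]; constructor <;> linarith
    refine ⟨256 * C * (C + |c|), Kpos, 1/2, by norm_num, fun h h0 hδ => ?_⟩
    have key := quadSq g c C hC hg (-lam + 1) (-lam) hu hv h h0 hδ
    have e1 : g ((-lam + 1) * h) - g ((-lam) * h)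
        = f (xc - lam * h + h) - f (xc - lam * h) := by
      simp only [hgdef]
      have a1 : xc + (-lam + 1) * h = xc - lam * h + h := by ring
      have a2 : xc + (-lam) * h = xc - lam * h := by ring
      rw [a1, a2]; ring
    have e2 : c ^ 2 * ((-lam + 1) ^ 2 - (-lam) ^ 2) ^ 2 * h ^ 4
        = (1/4) * (2 * lam - 1) ^ 2 * D ^ 2 * h ^ 4 := by
      simp only [hc]; ring
    rw [e1, e2] at key
    exact key
  · constructor
    · intro hz
      rcases mul_eq_zero.mp hz with hz' | hs
      · rcases mul_eq_zero.mp hz' with h4 | hsq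
        · norm_num at h4
        · have : 2 * lam - 1 = 0 := by
            have := sq_eq_zero_iff.mp hsq
            exact this
          linarith
      · exact absurd (sq_eq_zero_iff.mp hs) h2
    · rintro rfl; norm_num
  · constructor
    · intro hz
      rcases mul_eq_zero.mp hz with hz' | hs
      · rcases mul_eq_zero.mp hz' with h4 | hsq
        · norm_num at h4
        · have : 2 * lam + 1 = 0 := sq_eq_zero_iff.mp hsq
          linarith
      · exact absurd (sq_eq_zero_iff.mp hs) h2
    · rintro rfl; norm_num
end

section
/- Let f be smooth with a first-order critical point at x_c = x_j + λΔx (f'(x_c) = 0, f''(x_c) ≠ 0, f'''(x_c) ≠ 0) with λ ∈ (-1,1), λ ≠ 0. Then τ₃ := |β₀ - β₁|, where β₀ = (f_j - f_{j-1})² and β₁ = (f_{j+1} - f_j)², satisfies τ₃ = |−2λ f''(x_c)² Δx⁴ + O(Δx⁵)|, so τ₃ = O(Δx⁴) with nonzero Δx⁴ leading coefficient; whereas if λ = 0 then τ₃ = |(1/3) f''(x_j) f'''(x_j)| Δx⁵ + O(Δx⁷), i.e. τ₃ = O(Δx⁵). -/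
lemma bound_of_continuous (g : ℝ → ℝ) (hg : Continuous g) (a b : ℝ) :
    ∃ M : ℝ, 0 ≤ M ∧ ∀ x ∈ Set.Icc a b, |g x| ≤ M := by
  obtain ⟨M, hM⟩ := (isCompact_Icc (a := a) (b := b)).exists_bound_of_continuousOn
    hg.continuousOn
  refine ⟨max M 0, le_max_right _ _, fun x hx => ?_⟩
  have := hM x hx
  rw [Real.norm_eq_abs] at this
  exact this.trans (le_max_left _ _)

lemma taylor_bound (n : ℕ) : ∀ (f : ℝ → ℝ), ContDiff ℝ (⊤ : ℕ∞) f → ∀ x₀ : ℝ,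
    ∃ M : ℝ, 0 ≤ M ∧ ∀ t : ℝ, |t| ≤ 1 →
      |f (x₀ + t) - ∑ k ∈ Finset.range (n+1), iteratedDeriv k f x₀ / (k.factorial) * t ^ k|
        ≤ M * |t| ^ (n+1) := by
  induction n with
  | zero =>
    intro f hf x₀
    obtain ⟨M, hM0, hM⟩ := bound_of_continuous (deriv f)
      (hf.continuous_deriv (by exact_mod_cast le_top)) (x₀ - 1) (x₀ + 1)
    refine ⟨M, hM0, fun t ht => ?_⟩
    have key := Convex.norm_image_sub_le_of_norm_hasDerivWithin_le
      (f := f) (f' := deriv f) (s := Set.Icc (x₀ - 1) (x₀ + 1)) (C := M)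
      (fun x _ => ((hf.differentiable (by simp)).differentiableAt.hasDerivAt).hasDerivWithinAt)
      (fun x hx => by rw [Real.norm_eq_abs]; exact hM x hx)
      (convex_Icc _ _) (x := x₀) (y := x₀ + t)
      (Set.mem_Icc.mpr ⟨by linarith, by linarith⟩)
      (by
        have h1 := abs_le.mp ht
        exact Set.mem_Icc.mpr ⟨by linarith [h1.1], by linarith [h1.2]⟩)
    simp only [Real.norm_eq_abs, add_sub_cancel_left] at key
    simpa [iteratedDeriv_zero] using key
  | succ n ih =>
    intro f hf x₀
    obtain ⟨M, hM0, hM⟩ := ih (deriv f) ((contDiff_infty_iff_deriv.mp hf).2) x₀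
    refine ⟨M, hM0, fun t ht => ?_⟩
    set g : ℝ → ℝ := fun t =>
      f (x₀ + t) - ∑ k ∈ Finset.range (n+2), iteratedDeriv k f x₀ / (k.factorial) * t ^ k
      with hg
    have hg0 : g 0 = 0 := by
      simp [hg, Finset.sum_range_succ']
    have hgderiv : ∀ s : ℝ, HasDerivAt g
        (deriv f (x₀ + s) - ∑ k ∈ Finset.range (n+1),
          iteratedDeriv k (deriv f) x₀ / (k.factorial) * s ^ k) s := by
      intro s
      have hcomp : HasDerivAt (fun t : ℝ => f (x₀ + t)) (deriv f (x₀ + s)) s := by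
        have h1 : HasDerivAt (fun t : ℝ => x₀ + t) 1 s := by
          simpa using (hasDerivAt_id s).const_add x₀
        have h2 : HasDerivAt f (deriv f (x₀ + s)) (x₀ + s) :=
          ((hf.differentiable (by simp)).differentiableAt).hasDerivAt
        have h3 := h2.comp s h1; rw [mul_one] at h3; exact h3
      have hsum : HasDerivAt (fun t : ℝ => ∑ k ∈ Finset.range (n+2),
          iteratedDeriv k f x₀ / (k.factorial) * t ^ k)
          (∑ k ∈ Finset.range (n+2),
            iteratedDeriv k f x₀ / (k.factorial) * ((k : ℝ) * s ^ (k-1))) s := by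
        apply HasDerivAt.fun_sum
        intro k _
        exact (hasDerivAt_pow k s).const_mul _
      have heq : ∑ k ∈ Finset.range (n+2),
          iteratedDeriv k f x₀ / (k.factorial) * ((k : ℝ) * s ^ (k-1))
          = ∑ k ∈ Finset.range (n+1),
            iteratedDeriv k (deriv f) x₀ / (k.factorial) * s ^ k := by
        rw [Finset.sum_range_succ']
        simp only [Nat.cast_zero, zero_mul, mul_zero, add_zero]
        apply Finset.sum_congr rfl
        intro k _
        rw [← iteratedDeriv_succ']
        have hfac : ((k+1).factorial : ℝ) = (k+1) * k.factorial := by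
          push_cast [Nat.factorial_succ]; ring
        have hk0 : (k.factorial : ℝ) ≠ 0 := Nat.cast_ne_zero.mpr k.factorial_ne_zero
        have hk1 : ((k:ℝ) + 1) ≠ 0 := by positivity
        rw [hfac]
        field_simp
        simp only [Nat.add_sub_cancel]; push_cast; ring
      rw [← heq]
      exact hcomp.sub hsum
    have key := Convex.norm_image_sub_le_of_norm_hasDerivWithin_le
      (f := g) (f' := fun s => deriv f (x₀ + s) - ∑ k ∈ Finset.range (n+1),
          iteratedDeriv k (deriv f) x₀ / (k.factorial) * s ^ k)
      (s := Set.Icc (-|t|) (|t|)) (C := M * |t| ^ (n+1))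
      (fun x _ => (hgderiv x).hasDerivWithinAt)
      (fun x hx => by
        rw [Real.norm_eq_abs]
        have hxt : |x| ≤ |t| := abs_le.mpr ⟨hx.1, hx.2⟩
        have := hM x (hxt.trans ht)
        refine this.trans ?_
        exact mul_le_mul_of_nonneg_left (pow_le_pow_left₀ (abs_nonneg _) hxt _) hM0)
      (convex_Icc _ _) (x := (0:ℝ)) (y := t)
      (Set.mem_Icc.mpr ⟨by simpa using abs_nonneg t, abs_nonneg t⟩)
      (Set.mem_Icc.mpr ⟨neg_abs_le t, le_abs_self t⟩)
    rw [hg0, sub_zero, sub_zero, Real.norm_eq_abs, Real.norm_eq_abs] at key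
    calc |g t| ≤ M * |t| ^ (n+1) * |t| := key
      _ = M * |t| ^ (n+2) := by ring


set_option maxHeartbeats 4000000 in
/-- Order of τ₃ = |β₀ − β₁| at a first-order critical point x_c = x_j + λΔx:
O(Δx⁴) with nonzero leading coefficient when λ ≠ 0, but O(Δx⁵) when λ = 0. -/
theorem stmt6 (f : ℝ → ℝ) (hf : ContDiff ℝ (⊤ : ℕ∞) f) (xc lam : ℝ)
    (hlam : lam ∈ Set.Ioo (-1 : ℝ) 1)
    (h1 : deriv f xc = 0) (h2 : iteratedDeriv 2 f xc ≠ 0)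
    (h3 : iteratedDeriv 3 f xc ≠ 0) :
    (lam ≠ 0 →
      (∃ C > 0, ∃ δ > 0, ∀ h : ℝ, 0 < h → h < δ →
        |abs ((f (xc - lam * h) - f (xc - lam * h - h)) ^ 2
            - (f (xc - lam * h + h) - f (xc - lam * h)) ^ 2)
          - |(-2) * lam * (iteratedDeriv 2 f xc) ^ 2| * h ^ 4| ≤ C * h ^ 5) ∧
      (-2) * lam * (iteratedDeriv 2 f xc) ^ 2 ≠ 0) ∧
    (lam = 0 →
      ∃ C > 0, ∃ δ > 0, ∀ h : ℝ, 0 < h → h < δ →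
        |abs ((f xc - f (xc - h)) ^ 2 - (f (xc + h) - f xc) ^ 2)
          - |(1 / 3) * (iteratedDeriv 2 f xc) * (iteratedDeriv 3 f xc)| * h ^ 5|
            ≤ C * h ^ 7) := by
  obtain ⟨hlam_lo, hlam_hi⟩ := hlam
  have hlam1 : |lam| ≤ 1 := abs_le.mpr ⟨le_of_lt hlam_lo, le_of_lt hlam_hi⟩
  set c2 : ℝ := iteratedDeriv 2 f xc / 2 with hc2
  set c3 : ℝ := iteratedDeriv 3 f xc / 6 with hc3
  set c4 : ℝ := iteratedDeriv 4 f xc / 24 with hc4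
  set c5 : ℝ := iteratedDeriv 5 f xc / 120 with hc5
  set c6 : ℝ := iteratedDeriv 6 f xc / 720 with hc6
  set S : ℝ → ℝ := fun t => f xc + c2*t^2 + c3*t^3 + c4*t^4 + c5*t^5 + c6*t^6 with hS
  obtain ⟨M, hM0, hM⟩ := taylor_bound 6 f (hf.of_le (by simp)) xc
  have hMS : ∀ t : ℝ, |t| ≤ 1 → |f (xc + t) - S t| ≤ M * |t|^7 := by
    intro t ht
    have hh := hM t ht
    have hsum : (∑ k ∈ Finset.range 7,
        iteratedDeriv k f xc / (k.factorial : ℝ) * t ^ k) = S t := by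
      rw [Finset.sum_range_succ, Finset.sum_range_succ, Finset.sum_range_succ,
        Finset.sum_range_succ, Finset.sum_range_succ, Finset.sum_range_succ,
        Finset.sum_range_one, hS]
      simp only [iteratedDeriv_zero, iteratedDeriv_one, h1, hc2, hc3, hc4, hc5, hc6]
      norm_num [Nat.factorial]
      try ring
    rwa [hsum] at hh
  set SB : ℝ := |f xc| + |c2| + |c3| + |c4| + |c5| + |c6| with hSB
  have hSB0 : 0 ≤ SB := by
    rw [hSB]; positivity
  have hSBb : ∀ t : ℝ, |t| ≤ 1 → |S t| ≤ SB := by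
    intro t ht
    have hp : ∀ k : ℕ, |t^k| ≤ 1 := fun k => by
      rw [abs_pow]; exact pow_le_one₀ (abs_nonneg t) ht
    have b2 : |c2*t^2| ≤ |c2| := by
      rw [abs_mul]; exact mul_le_of_le_one_right (abs_nonneg _) (hp 2)
    have b3 : |c3*t^3| ≤ |c3| := by
      rw [abs_mul]; exact mul_le_of_le_one_right (abs_nonneg _) (hp 3)
    have b4 : |c4*t^4| ≤ |c4| := by
      rw [abs_mul]; exact mul_le_of_le_one_right (abs_nonneg _) (hp 4)
    have b5 : |c5*t^5| ≤ |c5| := by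
      rw [abs_mul]; exact mul_le_of_le_one_right (abs_nonneg _) (hp 5)
    have b6 : |c6*t^6| ≤ |c6| := by
      rw [abs_mul]; exact mul_le_of_le_one_right (abs_nonneg _) (hp 6)
    have chain : |S t| ≤ |f xc| + |c2*t^2| + |c3*t^3| + |c4*t^4| + |c5*t^5| + |c6*t^6| := by
      rw [hS]
      calc |f xc + c2*t^2 + c3*t^3 + c4*t^4 + c5*t^5 + c6*t^6|
          ≤ |f xc + c2*t^2 + c3*t^3 + c4*t^4 + c5*t^5| + |c6*t^6| := abs_add_le _ _
        _ ≤ (|f xc + c2*t^2 + c3*t^3 + c4*t^4| + |c5*t^5|) + |c6*t^6| :=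
            add_le_add_left (abs_add_le _ _) _
        _ ≤ ((|f xc + c2*t^2 + c3*t^3| + |c4*t^4|) + |c5*t^5|) + |c6*t^6| :=
            add_le_add_left (add_le_add_left (abs_add_le _ _) _) _
        _ ≤ (((|f xc + c2*t^2| + |c3*t^3|) + |c4*t^4|) + |c5*t^5|) + |c6*t^6| :=
            add_le_add_left (add_le_add_left (add_le_add_left (abs_add_le _ _) _) _) _
        _ ≤ ((((|f xc| + |c2*t^2|) + |c3*t^3|) + |c4*t^4|) + |c5*t^5|) + |c6*t^6| :=
            add_le_add_left (add_le_add_left (add_le_add_left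
              (add_le_add_left (abs_add_le _ _) _) _) _) _
    rw [hSB]; linarith
  constructor
  · -- lam ≠ 0 case
    intro hl0
    constructor
    · -- the estimate
      set Wf : ℝ → ℝ := fun x => (-4:ℝ)*c2*c3 + (-36:ℝ)*lam^2*c2*c3 + (12:ℝ)*x*lam*c3^2 + (24:ℝ)*x*lam*c2*c4 + (36:ℝ)*x*lam^3*c3^2 + (64:ℝ)*x*lam^3*c2*c4 + (-4:ℝ)*x^2*c3*c4 + (-4:ℝ)*x^2*c2*c5 + (-84:ℝ)*x^2*lam^2*c3*c4 + (-80:ℝ)*x^2*lam^2*c2*c5 + (-120:ℝ)*x^2*lam^4*c3*c4 + (-100:ℝ)*x^2*lam^4*c2*c5 + (16:ℝ)*x^3*lam*c4^2 + (32:ℝ)*x^3*lam*c3*c5 + (32:ℝ)*x^3*lam*c2*c6 + (112:ℝ)*x^3*lam^3*c4^2 + (220:ℝ)*x^3*lam^3*c3*c5 + (200:ℝ)*x^3*lam^3*c2*c6 + (96:ℝ)*x^3*lam^5*c4^2 + (180:ℝ)*x^3*lam^5*c3*c5 + (144:ℝ)*x^3*lam^5*c2*c6 + (-4:ℝ)*x^4*c4*c5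 + (-4:ℝ)*x^4*c3*c6 + (-144:ℝ)*x^4*lam^2*c4*c5 + (-144:ℝ)*x^4*lam^2*c3*c6 + (-500:ℝ)*x^4*lam^4*c4*c5 + (-480:ℝ)*x^4*lam^4*c3*c6 + (-280:ℝ)*x^4*lam^6*c4*c5 + (-252:ℝ)*x^4*lam^6*c3*c6 + (20:ℝ)*x^5*lam*c5^2 + (40:ℝ)*x^5*lam*c4*c6 + (240:ℝ)*x^5*lam^3*c5^2 + (480:ℝ)*x^5*lam^3*c4*c6 + (500:ℝ)*x^5*lam^5*c5^2 + (984:ℝ)*x^5*lam^5*c4*c6 + (200:ℝ)*x^5*lam^7*c5^2 + (384:ℝ)*x^5*lam^7*c4*c6 + (-4:ℝ)*x^6*c5*c6 + (-220:ℝ)*x^6*lam^2*c5*c6 + (-1320:ℝ)*x^6*lam^4*c5*c6 + (-1820:ℝ)*x^6*lam^6*c5*c6 + (-540:ℝ)*x^6*lam^8*c5*c6 + (24:ℝ)*x^7*lam*c6^2 + (440:ℝ)*x^7*lam^3*c6^2 + (1584:ℝ)*x^7*lam^5*c6^2 + (1560:ℝ)*x^7*lam^7*c6^2 + (360:ℝ)*x^7*lam^9*c6^2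 with hWf
      obtain ⟨CW, hCW0, hCW⟩ := bound_of_continuous Wf (by rw [hWf]; fun_prop) 0 1
      refine ⟨CW + 2048*SB*M + 131072*M^2 + 1, by positivity, 1/2, by norm_num, ?_⟩
      intro h hpos hlt
      have hh1 : h ≤ 1 := by linarith
      have h2h1 : 2*h ≤ 1 := by linarith
      have h75 : h^7 ≤ h^5 := pow_le_pow_of_le_one hpos.le hh1 (by norm_num)
      have hlh : |lam*h| ≤ h := by
        rw [abs_mul, abs_of_pos hpos]
        calc |lam| * h ≤ 1 * h := mul_le_mul_of_nonneg_right hlam1 hpos.le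
          _ = h := one_mul h
      set t0 : ℝ := -(lam*h) with ht0
      set tm : ℝ := -(lam*h) - h with htm
      set tp : ℝ := -(lam*h) + h with htp
      have ht0b : |t0| ≤ 2*h := by
        rw [ht0, abs_neg]; linarith
      have htmb : |tm| ≤ 2*h := by
        rw [htm]
        calc |-(lam*h) - h| ≤ |-(lam*h)| + |h| := abs_sub _ _
          _ ≤ 2*h := by rw [abs_neg, abs_of_pos hpos]; linarith
      have htpb : |tp| ≤ 2*h := by
        rw [htp]
        calc |-(lam*h) + h| ≤ |-(lam*h)| + |h| := abs_add_le _ _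
          _ ≤ 2*h := by rw [abs_neg, abs_of_pos hpos]; linarith
      have ht01 : |t0| ≤ 1 := ht0b.trans h2h1
      have htm1 : |tm| ≤ 1 := htmb.trans h2h1
      have htp1 : |tp| ≤ 1 := htpb.trans h2h1
      set e0 : ℝ := f (xc + t0) - S t0 with he0
      set em : ℝ := f (xc + tm) - S tm with hem
      set ep : ℝ := f (xc + tp) - S tp with hep
      have hbd : ∀ t : ℝ, |t| ≤ 2*h → |t| ≤ 1 → |f (xc + t) - S t| ≤ 128*M*h^7 := by
        intro t htb ht1
        refine (hMS t ht1).trans ?_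
        have hle : |t|^7 ≤ 128*h^7 := by
          calc |t|^7 ≤ (2*h)^7 := pow_le_pow_left₀ (abs_nonneg _) htb 7
            _ = 128*h^7 := by ring
        calc M * |t|^7 ≤ M * (128*h^7) := mul_le_mul_of_nonneg_left hle hM0
          _ = 128*M*h^7 := by ring
      have he0b : |e0| ≤ 128*M*h^7 := hbd t0 ht0b ht01
      have hemb : |em| ≤ 128*M*h^7 := hbd tm htmb htm1
      have hepb : |ep| ≤ 128*M*h^7 := hbd tp htpb htp1
      have hf0 : f (xc - lam * h) = S t0 + e0 := by
        have hx : xc + t0 = xc - lam*h := by rw [ht0]; ring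
        rw [he0, hx]; ring
      have hfm : f (xc - lam * h - h) = S tm + em := by
        have hx : xc + tm = xc - lam*h - h := by rw [htm]; ring
        rw [hem, hx]; ring
      have hfp : f (xc - lam * h + h) = S tp + ep := by
        have hx : xc + tp = xc - lam*h + h := by rw [htp]; ring
        rw [hep, hx]; ring
      rw [hf0, hfm, hfp]
      set X : ℝ := (S t0 + e0 - (S tm + em))^2 - (S tp + ep - (S t0 + e0))^2 with hX
      set b : ℝ := 8*c2^2*lam*h^4 with hb
      have habs2 : |(-2) * lam * (iteratedDeriv 2 f xc) ^ 2| * h ^ 4 = |b| := by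
        rw [hb]
        rw [show (8:ℝ)*c2^2*lam*h^4 = -(((-2) * lam * (iteratedDeriv 2 f xc) ^ 2) * h^4)
          from by rw [hc2]; ring]
        rw [abs_neg, abs_mul (((-2):ℝ) * lam * (iteratedDeriv 2 f xc) ^ 2) (h^4),
          abs_pow, abs_of_pos hpos]
      set E : ℝ := 2*(S t0 - S tm)*(e0 - em) + (e0 - em)^2
          - 2*(S tp - S t0)*(ep - e0) - (ep - e0)^2 with hE
      have hdecomp : X - b = h^5 * Wf h + E := by
        rw [hX, hb, hE, hWf, hS, ht0, htm, htp]
        simp only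
        ring
      have step1 : |abs X - |(-2) * lam * (iteratedDeriv 2 f xc) ^ 2| * h ^ 4| ≤ |X - b| := by
        rw [habs2]; exact abs_abs_sub_abs_le_abs_sub X b
      refine step1.trans ?_
      have heP : |e0 - em| ≤ 256*M*h^7 := by
        calc |e0 - em| ≤ |e0| + |em| := abs_sub _ _
          _ ≤ 256*M*h^7 := by linarith
      have heQ : |ep - e0| ≤ 256*M*h^7 := by
        calc |ep - e0| ≤ |ep| + |e0| := abs_sub _ _
          _ ≤ 256*M*h^7 := by linarith
      have hP : |S t0 - S tm| ≤ 2*SB := by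
        calc |S t0 - S tm| ≤ |S t0| + |S tm| := abs_sub _ _
          _ ≤ 2*SB := by linarith [hSBb t0 ht01, hSBb tm htm1]
      have hQ : |S tp - S t0| ≤ 2*SB := by
        calc |S tp - S t0| ≤ |S tp| + |S t0| := abs_sub _ _
          _ ≤ 2*SB := by linarith [hSBb tp htp1, hSBb t0 ht01]
      have hMh : (0:ℝ) ≤ 256*M*h^7 := by positivity
      have tP : |S t0 - S tm| * |e0 - em| ≤ (2*SB) * (256*M*h^7) :=
        mul_le_mul hP heP (abs_nonneg _) (by linarith)
      have tQ : |S tp - S t0| * |ep - e0| ≤ (2*SB) * (256*M*h^7) :=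
        mul_le_mul hQ heQ (abs_nonneg _) (by linarith)
      have sP : (e0 - em)^2 ≤ (256*M*h^7)^2 := by
        rw [← sq_abs]; exact pow_le_pow_left₀ (abs_nonneg _) heP 2
      have sQ : (ep - e0)^2 ≤ (256*M*h^7)^2 := by
        rw [← sq_abs]; exact pow_le_pow_left₀ (abs_nonneg _) heQ 2
      have h147 : h^14 ≤ h^7 := pow_le_pow_of_le_one hpos.le hh1 (by norm_num)
      have hEb : |E| ≤ 2048*SB*M*h^7 + 131072*M^2*h^7 := by
        have c1 : |2*(S t0 - S tm)*(e0 - em)| ≤ 1024*SB*M*h^7 := by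
          rw [abs_mul, abs_mul, abs_two]
          linarith [tP]
        have c2' : |2*(S tp - S t0)*(ep - e0)| ≤ 1024*SB*M*h^7 := by
          rw [abs_mul, abs_mul, abs_two]
          linarith [tQ]
        have c3' : |(e0 - em)^2| ≤ 65536*M^2*h^7 := by
          rw [abs_of_nonneg (sq_nonneg _)]
          have hm := mul_le_mul_of_nonneg_left h147 (sq_nonneg M)
          linarith [sP]
        have c4' : |(ep - e0)^2| ≤ 65536*M^2*h^7 := by
          rw [abs_of_nonneg (sq_nonneg _)]
          have hm := mul_le_mul_of_nonneg_left h147 (sq_nonneg M)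
          linarith [sQ]
        calc |E| ≤ |2*(S t0 - S tm)*(e0 - em) + (e0 - em)^2 - 2*(S tp - S t0)*(ep - e0)|
              + |(ep - e0)^2| := by rw [hE]; exact abs_sub _ _
          _ ≤ |2*(S t0 - S tm)*(e0 - em) + (e0 - em)^2| + |2*(S tp - S t0)*(ep - e0)|
              + |(ep - e0)^2| := add_le_add_left (abs_sub _ _) _
          _ ≤ |2*(S t0 - S tm)*(e0 - em)| + |(e0 - em)^2| + |2*(S tp - S t0)*(ep - e0)|
              + |(ep - e0)^2| := add_le_add_left (add_le_add_left (abs_add_le _ _) _) _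
          _ ≤ 2048*SB*M*h^7 + 131072*M^2*h^7 := by linarith
      have hWb : |h^5 * Wf h| ≤ h^5 * CW := by
        rw [abs_mul, abs_pow, abs_of_pos hpos]
        exact mul_le_mul_of_nonneg_left (hCW h ⟨hpos.le, hh1⟩) (by positivity)
      calc |X - b| = |h^5 * Wf h + E| := by rw [hdecomp]
        _ ≤ |h^5 * Wf h| + |E| := abs_add_le _ _
        _ ≤ h^5 * CW + (2048*SB*M*h^7 + 131072*M^2*h^7) := by linarith
        _ ≤ (CW + 2048*SB*M + 131072*M^2 + 1) * h^5 := by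
            have k1 : 2048*SB*M*h^7 ≤ 2048*SB*M*h^5 :=
              mul_le_mul_of_nonneg_left h75 (by positivity)
            have k2 : 131072*M^2*h^7 ≤ 131072*M^2*h^5 :=
              mul_le_mul_of_nonneg_left h75 (by positivity)
            linarith [k1, k2, pow_nonneg hpos.le 5]
    · exact mul_ne_zero (mul_ne_zero (by norm_num) hl0) (pow_ne_zero 2 h2)
  · -- lam = 0 case
    intro hl0
    set Wg : ℝ → ℝ := fun x => (-4:ℝ)*c3*c4 + (-4:ℝ)*c2*c5 + (-4:ℝ)*x^2*c4*c5 + (-4:ℝ)*x^2*c3*c6 + (-4:ℝ)*x^4*c5*c6 with hWg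
    obtain ⟨CW, hCW0, hCW⟩ := bound_of_continuous Wg (by rw [hWg]; fun_prop) 0 1
    refine ⟨CW + 8*SB*M + 2*M^2 + 1, by positivity, 1, by norm_num, ?_⟩
    intro h hpos hlt
    have hh1 : h ≤ 1 := hlt.le
    have hhab : |h| ≤ 1 := by rwa [abs_of_pos hpos]
    have hhabn : |(-h)| ≤ 1 := by rwa [abs_neg]
    set em : ℝ := f (xc + (-h)) - S (-h) with hem
    set ep : ℝ := f (xc + h) - S h with hep
    have hemb : |em| ≤ M*h^7 := by
      have := hMS (-h) hhabn
      rwa [← hem, abs_neg, abs_of_pos hpos] at this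
    have hepb : |ep| ≤ M*h^7 := by
      have := hMS h hhab
      rwa [← hep, abs_of_pos hpos] at this
    have hfc : f xc = S 0 := by rw [hS]; simp
    have hfm : f (xc - h) = S (-h) + em := by
      have hx : xc + (-h) = xc - h := by ring
      rw [hem, hx]; ring
    have hfp : f (xc + h) = S h + ep := by rw [hep]; ring
    rw [hfc, hfm, hfp]
    set X : ℝ := (S 0 - (S (-h) + em))^2 - (S h + ep - S 0)^2 with hX
    set b : ℝ := (-4)*c2*c3*h^5 with hb
    have habs2 : |1 / 3 * (iteratedDeriv 2 f xc) * (iteratedDeriv 3 f xc)| * h ^ 5 = |b| := by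
      rw [hb]
      rw [show ((-4):ℝ)*c2*c3*h^5 = -((1 / 3 * (iteratedDeriv 2 f xc) * (iteratedDeriv 3 f xc)) * h^5)
        from by rw [hc2, hc3]; ring]
      rw [abs_neg, abs_mul ((1:ℝ) / 3 * (iteratedDeriv 2 f xc) * (iteratedDeriv 3 f xc)) (h^5),
        abs_pow, abs_of_pos hpos]
    set E : ℝ := -2*(S 0 - S (-h))*em + em^2 - 2*(S h - S 0)*ep - ep^2 with hE
    have hdecomp : X - b = h^7 * Wg h + E := by
      rw [hX, hb, hE, hWg, hS]
      simp only
      ring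
    have step1 : |abs X - |1 / 3 * (iteratedDeriv 2 f xc) * (iteratedDeriv 3 f xc)| * h ^ 5|
        ≤ |X - b| := by
      rw [habs2]; exact abs_abs_sub_abs_le_abs_sub X b
    refine step1.trans ?_
    have hP : |S 0 - S (-h)| ≤ 2*SB := by
      calc |S 0 - S (-h)| ≤ |S 0| + |S (-h)| := abs_sub _ _
        _ ≤ 2*SB := by linarith [hSBb 0 (by simp), hSBb (-h) hhabn]
    have hQ : |S h - S 0| ≤ 2*SB := by
      calc |S h - S 0| ≤ |S h| + |S 0| := abs_sub _ _
        _ ≤ 2*SB := by linarith [hSBb h hhab, hSBb 0 (by simp)]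
    have tP : |S 0 - S (-h)| * |em| ≤ (2*SB) * (M*h^7) :=
      mul_le_mul hP hemb (abs_nonneg _) (by linarith)
    have tQ : |S h - S 0| * |ep| ≤ (2*SB) * (M*h^7) :=
      mul_le_mul hQ hepb (abs_nonneg _) (by linarith)
    have h147 : h^14 ≤ h^7 := pow_le_pow_of_le_one hpos.le hh1 (by norm_num)
    have sP : em^2 ≤ (M*h^7)^2 := by
      rw [← sq_abs]; exact pow_le_pow_left₀ (abs_nonneg _) hemb 2
    have sQ : ep^2 ≤ (M*h^7)^2 := by
      rw [← sq_abs]; exact pow_le_pow_left₀ (abs_nonneg _) hepb 2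
    have hEb : |E| ≤ 8*SB*M*h^7 + 2*M^2*h^7 := by
      have c1 : |(-2)*(S 0 - S (-h))*em| ≤ 4*SB*M*h^7 := by
        rw [abs_mul, abs_mul]
        have h2a : |(-2:ℝ)| = 2 := by norm_num
        rw [h2a]
        linarith [tP]
      have c2' : |2*(S h - S 0)*ep| ≤ 4*SB*M*h^7 := by
        rw [abs_mul, abs_mul, abs_two]
        linarith [tQ]
      have c3' : |em^2| ≤ M^2*h^7 := by
        rw [abs_of_nonneg (sq_nonneg _)]
        have hm := mul_le_mul_of_nonneg_left h147 (sq_nonneg M)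
        linarith [sP]
      have c4' : |ep^2| ≤ M^2*h^7 := by
        rw [abs_of_nonneg (sq_nonneg _)]
        have hm := mul_le_mul_of_nonneg_left h147 (sq_nonneg M)
        linarith [sQ]
      calc |E| ≤ |(-2)*(S 0 - S (-h))*em + em^2 - 2*(S h - S 0)*ep| + |ep^2| := by
            rw [hE]; exact abs_sub _ _
        _ ≤ |(-2)*(S 0 - S (-h))*em + em^2| + |2*(S h - S 0)*ep| + |ep^2| :=
            add_le_add_left (abs_sub _ _) _
        _ ≤ |(-2)*(S 0 - S (-h))*em| + |em^2| + |2*(S h - S 0)*ep| + |ep^2| :=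
            add_le_add_left (add_le_add_left (abs_add_le _ _) _) _
        _ ≤ 8*SB*M*h^7 + 2*M^2*h^7 := by linarith
    have hWb : |h^7 * Wg h| ≤ h^7 * CW := by
      rw [abs_mul, abs_pow, abs_of_pos hpos]
      exact mul_le_mul_of_nonneg_left (hCW h ⟨hpos.le, hh1⟩) (by positivity)
    calc |X - b| = |h^7 * Wg h + E| := by rw [hdecomp]
      _ ≤ |h^7 * Wg h| + |E| := abs_add_le _ _
      _ ≤ h^7 * CW + (8*SB*M*h^7 + 2*M^2*h^7) := by linarith
      _ ≤ (CW + 8*SB*M + 2*M^2 + 1) * h^7 := by linarith [pow_nonneg hpos.le 7]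
end

section
/- Let f be smooth with a first-order critical point at x_c = x_j + λΔx (f'(x_c) = 0, f''(x_c) ≠ 0), λ ∈ (-1,1). Then (f_{j+1} - 2f_j + f_{j-1})² = f''(x_c)² Δx⁴ − 2λ f''(x_c) f'''(x_c) Δx⁵ + O(Δx⁶); in particular its leading Δx⁴ coefficient f''(x_c)² is nonzero for every λ, unlike the substencil indicators β₀, β₁ which degenerate at λ = ∓1/2. -/
open Set

private lemma aux_affine (f : ℝ → ℝ) (hf : ContDiff ℝ (⊤ : ℕ∞) f) (xc a : ℝ) (n : ℕ) :
    iteratedDeriv n (fun h : ℝ => f (xc + a * h)) 0 = a ^ n * iteratedDeriv n f xc := by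
  have hg : ContDiff ℝ n (fun z : ℝ => f (xc + z)) :=
    (hf.of_le (by exact_mod_cast le_top)).comp (contDiff_const.add contDiff_id)
  calc iteratedDeriv n (fun h : ℝ => f (xc + a * h)) 0
      = a ^ n * iteratedDeriv n (fun z : ℝ => f (xc + z)) (a * 0) :=
        congrFun (iteratedDeriv_comp_const_mul hg a) 0
    _ = a ^ n * iteratedDeriv n f (xc + a * 0) := by
        rw [congrFun (iteratedDeriv_comp_const_add n f xc) (a * 0)]
    _ = a ^ n * iteratedDeriv n f xc := by norm_num

private lemma aux_comb (f : ℝ → ℝ) (hf : ContDiff ℝ (⊤ : ℕ∞) f) (xc a b c : ℝ) (n : ℕ) :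
    iteratedDeriv n (fun h : ℝ => f (xc + a * h) - 2 * f (xc + b * h) + f (xc + c * h)) 0
      = (a ^ n - 2 * b ^ n + c ^ n) * iteratedDeriv n f xc := by
  have cd : ∀ t : ℝ, ContDiff ℝ n (fun h : ℝ => f (xc + t * h)) := fun t =>
    (hf.of_le (by exact_mod_cast le_top)).comp (contDiff_const.add (contDiff_const.mul contDiff_id))
  have hmem : (0:ℝ) ∈ (univ : Set ℝ) := mem_univ 0
  have hU : UniqueDiffOn ℝ (univ : Set ℝ) := uniqueDiffOn_univ
  have step1 : iteratedDerivWithin n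
      (((fun h : ℝ => f (xc + a * h)) - fun h : ℝ => 2 * f (xc + b * h)) +
        fun h : ℝ => f (xc + c * h)) univ 0
      = iteratedDerivWithin n
          ((fun h : ℝ => f (xc + a * h)) - fun h : ℝ => 2 * f (xc + b * h)) univ 0
        + iteratedDerivWithin n (fun h : ℝ => f (xc + c * h)) univ 0 :=
    iteratedDerivWithin_add hmem hU ((cd a).sub (contDiff_const.mul (cd b))).contDiffWithinAt
      (cd c).contDiffWithinAt
  have step2 : iteratedDerivWithin n
      ((fun h : ℝ => f (xc + a * h)) - fun h : ℝ => 2 * f (xc + b * h)) univ 0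
      = iteratedDerivWithin n (fun h : ℝ => f (xc + a * h)) univ 0
        - iteratedDerivWithin n (fun h : ℝ => 2 * f (xc + b * h)) univ 0 :=
    iteratedDerivWithin_sub hmem hU (cd a).contDiffWithinAt (contDiff_const.mul (cd b)).contDiffWithinAt
  have step3 : iteratedDerivWithin n (fun h : ℝ => 2 * f (xc + b * h)) univ 0
      = 2 * iteratedDerivWithin n (fun h : ℝ => f (xc + b * h)) univ 0 :=
    iteratedDerivWithin_const_mul hmem hU 2 (cd b).contDiffWithinAt
  calc iteratedDeriv n (fun h : ℝ => f (xc + a * h) - 2 * f (xc + b * h) + f (xc + c * h)) 0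
      = iteratedDerivWithin n
          (((fun h : ℝ => f (xc + a * h)) - fun h : ℝ => 2 * f (xc + b * h)) +
            fun h : ℝ => f (xc + c * h)) univ 0 :=
        (congrFun (iteratedDerivWithin_univ) 0).symm
    _ = iteratedDerivWithin n (fun h : ℝ => f (xc + a * h)) univ 0
          - 2 * iteratedDerivWithin n (fun h : ℝ => f (xc + b * h)) univ 0
        + iteratedDerivWithin n (fun h : ℝ => f (xc + c * h)) univ 0 := by
        rw [step1, step2, step3]
    _ = iteratedDeriv n (fun h : ℝ => f (xc + a * h)) 0
          - 2 * iteratedDeriv n (fun h : ℝ => f (xc + b * h)) 0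
        + iteratedDeriv n (fun h : ℝ => f (xc + c * h)) 0 := by
        rw [congrFun (iteratedDerivWithin_univ) 0, congrFun (iteratedDerivWithin_univ) 0,
          congrFun (iteratedDerivWithin_univ) 0]
    _ = (a ^ n - 2 * b ^ n + c ^ n) * iteratedDeriv n f xc := by
        rw [aux_affine f hf xc a n, aux_affine f hf xc b n, aux_affine f hf xc c n]; ring

private lemma aux_within (g : ℝ → ℝ) (hg : ContDiff ℝ (⊤ : ℕ∞) g) (n : ℕ) :
    ∀ x ∈ Icc (0:ℝ) 1, iteratedDerivWithin n g (Icc 0 1) x = iteratedDeriv n g x := by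
  have hu : UniqueDiffOn ℝ (Icc (0:ℝ) 1) := uniqueDiffOn_Icc one_pos
  induction n with
  | zero => intro x hx; simp
  | succ n IH =>
    intro x hx
    rw [iteratedDerivWithin_succ, iteratedDeriv_succ]
    have hcongr : derivWithin (iteratedDerivWithin n g (Icc 0 1)) (Icc 0 1) x
        = derivWithin (iteratedDeriv n g) (Icc 0 1) x :=
      derivWithin_congr (fun y hy => IH y hy) (IH x hx)
    rw [hcongr]
    exact ((hg.differentiable_iteratedDeriv n (by exact_mod_cast ENat.coe_lt_top n)) x).derivWithin
      (hu.uniqueDiffWithinAt hx)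

set_option maxHeartbeats 1000000 in
/-- Expansion of the squared second difference (the common form of τ_N, τ_P, τ_{F3})
about a first-order critical point x_c = x_j + λΔx: its leading Δx⁴ coefficient
f''(x_c)² never vanishes. -/
theorem stmt7 (f : ℝ → ℝ) (hf : ContDiff ℝ (⊤ : ℕ∞) f) (xc lam : ℝ)
    (hlam : lam ∈ Set.Ioo (-1 : ℝ) 1)
    (h1 : deriv f xc = 0) (h2 : iteratedDeriv 2 f xc ≠ 0) :
    (∃ C > 0, ∃ δ > 0, ∀ h : ℝ, 0 < h → h < δ →
      |(f (xc - lam * h + h) - 2 * f (xc - lam * h) + f (xc - lam * h - h)) ^ 2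
        - ((iteratedDeriv 2 f xc) ^ 2 * h ^ 4
          - 2 * lam * (iteratedDeriv 2 f xc) * (iteratedDeriv 3 f xc) * h ^ 5)|
        ≤ C * h ^ 6) ∧
    (iteratedDeriv 2 f xc) ^ 2 ≠ 0 := by
  refine ⟨?_, pow_ne_zero 2 h2⟩
  set A := iteratedDeriv 2 f xc with hA
  set B := iteratedDeriv 3 f xc with hB
  set g : ℝ → ℝ := fun h => f (xc + (1 - lam) * h) - 2 * f (xc + (-lam) * h)
    + f (xc + (-1 - lam) * h) with hgdef
  have hgsm : ContDiff ℝ (⊤ : ℕ∞) g := by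
    have c1 : ∀ t : ℝ, ContDiff ℝ (⊤ : ℕ∞) (fun h : ℝ => f (xc + t * h)) := fun t =>
      hf.comp (contDiff_const.add (contDiff_const.mul contDiff_id))
    exact ((c1 (1 - lam)).sub (contDiff_const.mul (c1 (-lam)))).add (c1 (-1 - lam))
  -- Taylor remainder bound
  have hcd : ContDiffOn ℝ ((3 : ℕ) + 1) g (Icc (0:ℝ) 1) := hgsm.contDiffOn.of_le (WithTop.coe_le_coe.mpr le_top)
  obtain ⟨C0, hC0⟩ := exists_taylor_mean_remainder_bound (zero_le_one) hcd
  -- Taylor polynomial computation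
  have hderivs : ∀ k : ℕ, iteratedDerivWithin k g (Icc 0 1) 0
      = ((1 - lam) ^ k - 2 * (-lam) ^ k + (-1 - lam) ^ k) * iteratedDeriv k f xc := by
    intro k
    rw [aux_within g hgsm k 0 (by constructor <;> norm_num)]
    rw [hgdef]
    exact aux_comb f hf xc (1 - lam) (-lam) (-1 - lam) k
  have hT : ∀ x : ℝ, taylorWithinEval g 3 (Icc 0 1) 0 x = A * x ^ 2 - lam * B * x ^ 3 := by
    intro x
    rw [taylor_within_apply]
    rw [Finset.sum_range_succ, Finset.sum_range_succ, Finset.sum_range_succ,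
      Finset.sum_range_one]
    rw [hderivs 0, hderivs 1, hderivs 2, hderivs 3]
    simp only [smul_eq_mul, Nat.factorial, hA, hB]
    push_cast
    ring
  set C1 := max C0 0 with hC1def
  have hC1 : (0:ℝ) ≤ C1 := le_max_right _ _
  set K := |A| + |lam * B| with hKdef
  have hK : (0:ℝ) ≤ K := add_nonneg (abs_nonneg _) (abs_nonneg _)
  refine ⟨lam ^ 2 * B ^ 2 + 2 * K * C1 + C1 ^ 2 + 1, by positivity, 1, one_pos, ?_⟩
  intro h h0 hδ
  have hmem : h ∈ Icc (0:ℝ) 1 := ⟨h0.le, hδ.le⟩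
  have hr0 : |g h - (A * h ^ 2 - lam * B * h ^ 3)| ≤ C1 * h ^ 4 := by
    have := hC0 h hmem
    rw [hT h, Real.norm_eq_abs, sub_zero] at this
    exact this.trans (mul_le_mul_of_nonneg_right (le_max_left _ _) (by positivity))
  have key : f (xc - lam * h + h) - 2 * f (xc - lam * h) + f (xc - lam * h - h) = g h := by
    have e1 : xc - lam * h + h = xc + (1 - lam) * h := by ring
    have e2 : xc - lam * h = xc + (-lam) * h := by ring
    have e3 : xc - lam * h - h = xc + (-1 - lam) * h := by ring
    rw [e1, e3, e2, hgdef]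
  rw [key]
  set r := g h - (A * h ^ 2 - lam * B * h ^ 3) with hrdef
  have hgh : g h = (A * h ^ 2 - lam * B * h ^ 3) + r := by rw [hrdef]; ring
  have hid : g h ^ 2 - (A ^ 2 * h ^ 4 - 2 * lam * A * B * h ^ 5)
      = lam ^ 2 * B ^ 2 * h ^ 6 + 2 * (A * h ^ 2 - lam * B * h ^ 3) * r + r ^ 2 := by
    rw [hgh]; ring
  rw [hid]
  have hP : |A * h ^ 2 - lam * B * h ^ 3| ≤ K * h ^ 2 := by
    have t1 : |A * h ^ 2 - lam * B * h ^ 3| ≤ |A * h ^ 2| + |lam * B * h ^ 3| := abs_sub _ _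
    have t2 : |A * h ^ 2| = |A| * h ^ 2 := by
      rw [abs_mul, abs_pow, abs_of_pos h0]
    have t3 : |lam * B * h ^ 3| = |lam * B| * h ^ 3 := by
      rw [abs_mul, abs_pow, abs_of_pos h0]
    have t4 : h ^ 3 ≤ h ^ 2 := pow_le_pow_of_le_one h0.le hδ.le (by norm_num)
    rw [t2, t3] at t1
    nlinarith [abs_nonneg (lam * B)]
  have htri : |lam ^ 2 * B ^ 2 * h ^ 6 + 2 * (A * h ^ 2 - lam * B * h ^ 3) * r + r ^ 2|
      ≤ |lam ^ 2 * B ^ 2 * h ^ 6| + |2 * (A * h ^ 2 - lam * B * h ^ 3) * r| + |r ^ 2| :=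
    abs_add_three _ _ _
  have e1 : |lam ^ 2 * B ^ 2 * h ^ 6| = lam ^ 2 * B ^ 2 * h ^ 6 := abs_of_nonneg (by positivity)
  have e2 : |2 * (A * h ^ 2 - lam * B * h ^ 3) * r|
      = 2 * |A * h ^ 2 - lam * B * h ^ 3| * |r| := by
    rw [abs_mul, abs_mul, abs_two]
  have e3 : |r ^ 2| = |r| ^ 2 := by rw [abs_pow]
  have hPr : 2 * |A * h ^ 2 - lam * B * h ^ 3| * |r| ≤ 2 * (K * h ^ 2) * (C1 * h ^ 4) := by
    have := mul_le_mul hP hr0 (abs_nonneg _) (by positivity)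
    nlinarith [abs_nonneg (A * h ^ 2 - lam * B * h ^ 3), abs_nonneg r]
  have hr2 : |r| ^ 2 ≤ (C1 * h ^ 4) ^ 2 :=
    pow_le_pow_left₀ (abs_nonneg _) hr0 2
  have h86 : h ^ 8 ≤ h ^ 6 := pow_le_pow_of_le_one h0.le hδ.le (by norm_num)
  calc |lam ^ 2 * B ^ 2 * h ^ 6 + 2 * (A * h ^ 2 - lam * B * h ^ 3) * r + r ^ 2|
      ≤ |lam ^ 2 * B ^ 2 * h ^ 6| + |2 * (A * h ^ 2 - lam * B * h ^ 3) * r| + |r ^ 2| := htri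
    _ ≤ lam ^ 2 * B ^ 2 * h ^ 6 + 2 * (K * h ^ 2) * (C1 * h ^ 4) + (C1 * h ^ 4) ^ 2 := by
        rw [e1, e2, e3]
        exact add_le_add (add_le_add le_rfl hPr) hr2
    _ ≤ (lam ^ 2 * B ^ 2 + 2 * K * C1 + C1 ^ 2 + 1) * h ^ 6 := by nlinarith [mul_le_mul_of_nonneg_left h86 (sq_nonneg C1), pow_nonneg h0.le 6, sq_nonneg C1]
end

section
/- Consider τ* = a₁(f_j − f_{j-1})² + a₂(f_{j+1} − f_j)² + a₃(f_{j+1} − f_{j-1})² + b(f_{j+1} − 2f_j + f_{j-1})² for a smooth function f with f_k = f(x_j + kΔx). The Taylor expansion of τ* about x_j has vanishing Δx² and Δx³ terms (i.e. τ* = O(Δx⁴)) for all smooth f if and only if a₁ = a₂ and a₃ = −a₁/2; in that case τ* = c·(f_{j+1} − 2f_j + f_{j-1})² + O(Δx⁶-corrections already implied) with c = (a₁ + 2b)/2, and when a₁ = −2b, τ* ≡ 0 identically. -/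
/-- If `|s| ≤ C * h` for all sufficiently small positive `h`, then `s = 0`. -/
private lemma aux_zero {s C δ : ℝ} (hC : 0 < C) (hδ : 0 < δ)
    (H : ∀ h : ℝ, 0 < h → h < δ → |s| ≤ C * h) : s = 0 := by
  by_contra hs
  have h0 : 0 < |s| := abs_pos.mpr hs
  set h : ℝ := min (δ / 2) (|s| / (2 * C)) with hh
  have hhpos : 0 < h := lt_min (by linarith) (by positivity)
  have hhδ : h < δ := lt_of_le_of_lt (min_le_left _ _) (by linarith)
  have h1 := H h hhpos hhδ
  have h2 : C * h ≤ C * (|s| / (2 * C)) := by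
    gcongr
    exact min_le_right _ _
  have h3 : C * (|s| / (2 * C)) = |s| / 2 := by
    field_simp
  rw [h3] at h2
  linarith

/-- Second-difference bound for smooth functions. -/
private lemma second_diff_bound (f : ℝ → ℝ) (hf : ContDiff ℝ (⊤ : ℕ∞) f) (xj : ℝ) :
    ∃ M : ℝ, 0 ≤ M ∧ ∀ h : ℝ, 0 < h → h < 1 →
      |f (xj + h) - 2 * f xj + f (xj - h)| ≤ M * h ^ 2 := by
  have hfi : ContDiff ℝ (⊤ : ℕ∞) f := hf.of_le (by simp)
  have hf' : ContDiff ℝ (⊤ : ℕ∞) (deriv f) := (contDiff_infty_iff_deriv.mp hfi).2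
  have hf'' : Continuous (deriv (deriv f)) :=
    ((contDiff_infty_iff_deriv.mp hf').2).continuous
  obtain ⟨M0, hM0⟩ :=
    (isCompact_Icc (a := xj - 1) (b := xj + 1)).exists_bound_of_continuousOn
      hf''.continuousOn
  set M : ℝ := max M0 0 with hM
  have hMnn : 0 ≤ M := le_max_right _ _
  have lip : ∀ x ∈ Set.Icc (xj - 1) (xj + 1), ∀ y ∈ Set.Icc (xj - 1) (xj + 1),
      |deriv f y - deriv f x| ≤ M * |y - x| := by
    intro x hx y hy
    have := Convex.norm_image_sub_le_of_norm_hasDerivWithin_le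
      (f := deriv f) (f' := deriv (deriv f)) (s := Set.Icc (xj - 1) (xj + 1)) (C := M)
      (fun z hz => ((hf'.differentiable (by simp)).differentiableAt.hasDerivAt).hasDerivWithinAt)
      (fun z hz => le_trans (hM0 z hz) (le_max_left _ _)) (convex_Icc _ _) hx hy
    simpa [Real.norm_eq_abs] using this
  refine ⟨2 * M, by positivity, fun h hh hh1 => ?_⟩
  set g : ℝ → ℝ := fun t => f (xj + t) - 2 * f xj + f (xj - t) with hg
  have hgderiv : ∀ t : ℝ, HasDerivAt g (deriv f (xj + t) - deriv f (xj - t)) t := by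
    intro t
    have d1 : HasDerivAt (fun t : ℝ => f (xj + t)) (deriv f (xj + t)) t := by
      have hfd : HasDerivAt f (deriv f (xj + t)) (xj + t) :=
        (hf.differentiable (by simp)).differentiableAt.hasDerivAt
      have hin : HasDerivAt (fun t : ℝ => xj + t) 1 t := (hasDerivAt_id t).const_add xj
      simpa [Function.comp_def] using hfd.comp t hin
    have d2 : HasDerivAt (fun t : ℝ => f (xj - t)) (-(deriv f (xj - t))) t := by
      have hfd : HasDerivAt f (deriv f (xj - t)) (xj - t) :=
        (hf.differentiable (by simp)).differentiableAt.hasDerivAt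
      have hin : HasDerivAt (fun t : ℝ => xj - t) (-1) t := (hasDerivAt_id t).const_sub xj
      have := hfd.comp t hin
      simpa [mul_comm, Function.comp_def] using this
    have := (d1.sub_const (2 * f xj)).add d2
    convert this using 1
    · rfl
    · rfl
    · rfl
    · exact sub_eq_add_neg _ _
  have gbound : ∀ s ∈ Set.Icc (0 : ℝ) h, |deriv f (xj + s) - deriv f (xj - s)| ≤ 2 * M * h := by
    intro s hs
    obtain ⟨hs0, hsh⟩ := hs
    have hmem1 : xj - s ∈ Set.Icc (xj - 1) (xj + 1) := by
      constructor <;> nlinarith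
    have hmem2 : xj + s ∈ Set.Icc (xj - 1) (xj + 1) := by
      constructor <;> nlinarith
    have := lip (xj - s) hmem1 (xj + s) hmem2
    have habs : |(xj + s) - (xj - s)| = 2 * s := by
      rw [abs_of_nonneg] <;> [ring; linarith]
    rw [habs] at this
    calc |deriv f (xj + s) - deriv f (xj - s)| ≤ M * (2 * s) := this
      _ ≤ 2 * M * h := by nlinarith
  have key := Convex.norm_image_sub_le_of_norm_hasDerivWithin_le
    (f := g) (f' := fun t => deriv f (xj + t) - deriv f (xj - t))
    (s := Set.Icc (0 : ℝ) h) (C := 2 * M * h)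
    (fun t _ => (hgderiv t).hasDerivWithinAt) gbound (convex_Icc _ _)
    (Set.left_mem_Icc.mpr hh.le) (Set.right_mem_Icc.mpr hh.le)
  have hg0 : g 0 = 0 := by simp [hg]; ring
  simp only [hg0, sub_zero, Real.norm_eq_abs] at key
  rw [abs_of_nonneg hh.le] at key
  calc |f (xj + h) - 2 * f xj + f (xj - h)| = |g h| := rfl
    _ ≤ 2 * M * h * h := key
    _ = 2 * M * h ^ 2 := by ring

/-- Characterization of the quadratic ansatz τ* that is O(Δx⁴) for every smooth f:
this holds iff a₁ = a₂ and a₃ = −a₁/2, in which case τ* = ((a₁+2b)/2)·(second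
difference)² identically, and τ* ≡ 0 when moreover a₁ = −2b. -/
theorem stmt8 (a₁ a₂ a₃ b : ℝ) :
    ((∀ f : ℝ → ℝ, ContDiff ℝ (⊤ : ℕ∞) f → ∀ xj : ℝ, ∃ C > 0, ∃ δ > 0, ∀ h : ℝ, 0 < h → h < δ →
        |a₁ * (f xj - f (xj - h)) ^ 2 + a₂ * (f (xj + h) - f xj) ^ 2
          + a₃ * (f (xj + h) - f (xj - h)) ^ 2
          + b * (f (xj + h) - 2 * f xj + f (xj - h)) ^ 2| ≤ C * h ^ 4)
      ↔ (a₁ = a₂ ∧ a₃ = -a₁ / 2)) ∧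
    ((a₁ = a₂ ∧ a₃ = -a₁ / 2) →
      ∀ u v w : ℝ, a₁ * (v - u) ^ 2 + a₂ * (w - v) ^ 2 + a₃ * (w - u) ^ 2
          + b * (w - 2 * v + u) ^ 2 = ((a₁ + 2 * b) / 2) * (w - 2 * v + u) ^ 2) ∧
    ((a₁ = a₂ ∧ a₃ = -a₁ / 2 ∧ a₁ = -2 * b) →
      ∀ u v w : ℝ, a₁ * (v - u) ^ 2 + a₂ * (w - v) ^ 2 + a₃ * (w - u) ^ 2
          + b * (w - 2 * v + u) ^ 2 = 0) := by
  refine ⟨⟨fun H => ?_, fun ⟨h12, h3⟩ => ?_⟩, ?_, ?_⟩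
  · -- forward direction
    -- Test with f = id at xj = 0 : get a₁ + a₂ + 4 a₃ = 0
    obtain ⟨C, hC, δ, hδ, hb⟩ := H id contDiff_id 0
    have hs : a₁ + a₂ + 4 * a₃ = 0 := by
      apply aux_zero hC (lt_min hδ one_pos)
      intro h hh hhδ
      obtain ⟨hδ1, hδ2⟩ := lt_min_iff.mp hhδ
      have := hb h hh hδ1
      have heq : a₁ * (id (0:ℝ) - id (0 - h)) ^ 2 + a₂ * (id (0 + h) - id 0) ^ 2
          + a₃ * (id (0 + h) - id (0 - h)) ^ 2 + b * (id (0 + h) - 2 * id 0 + id (0 - h)) ^ 2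
          = (a₁ + a₂ + 4 * a₃) * h ^ 2 := by simp [id]; ring
      rw [heq, abs_mul, abs_of_nonneg (by positivity : (0:ℝ) ≤ h ^ 2)] at this
      have hh2 : |a₁ + a₂ + 4 * a₃| ≤ C * h ^ 2 := by
        have := mul_le_mul_of_nonneg_right this (by positivity : (0:ℝ) ≤ (h ^ 2)⁻¹)
        calc |a₁ + a₂ + 4 * a₃| = |a₁ + a₂ + 4 * a₃| * h ^ 2 * (h ^ 2)⁻¹ := by
              field_simp
          _ ≤ C * h ^ 4 * (h ^ 2)⁻¹ := this
          _ = C * h ^ 2 := by field_simp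
      calc |a₁ + a₂ + 4 * a₃| ≤ C * h ^ 2 := hh2
        _ ≤ C * h := by nlinarith [mul_nonneg (mul_pos hC hh).le (by linarith : (0:ℝ) ≤ 1 - h)]
    -- Test with f = (·^2) at xj = 1 : get a₂ = a₁
    obtain ⟨C', hC', δ', hδ', hb'⟩ := H (fun x => x ^ 2) (contDiff_id.pow 2) 1
    have ht : a₂ - a₁ = 0 := by
      have h4 : (4 : ℝ) * (a₂ - a₁) = 0 := by
        apply aux_zero (show (0:ℝ) < C' + |a₁ + a₂ + 4 * b| + 1 by positivity)
          (lt_min hδ' one_pos)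
        intro h hh hhδ
        obtain ⟨hδ1, hδ2⟩ := lt_min_iff.mp hhδ
        have hB := hb' h hh hδ1
        have heq : a₁ * ((1:ℝ) ^ 2 - (1 - h) ^ 2) ^ 2 + a₂ * ((1 + h) ^ 2 - 1 ^ 2) ^ 2
            + a₃ * ((1 + h) ^ 2 - (1 - h) ^ 2) ^ 2
            + b * ((1 + h) ^ 2 - 2 * 1 ^ 2 + (1 - h) ^ 2) ^ 2
            = 4 * (a₁ + a₂ + 4 * a₃) * h ^ 2 + 4 * (a₂ - a₁) * h ^ 3
              + (a₁ + a₂ + 4 * b) * h ^ 4 := by ring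
        rw [heq, hs] at hB
        have hB' : |4 * (a₂ - a₁) * h ^ 3| ≤ (C' + |a₁ + a₂ + 4 * b|) * h ^ 4 := by
          have t1 : |4 * (a₂ - a₁) * h ^ 3| ≤
              |4 * 0 * h ^ 2 + 4 * (a₂ - a₁) * h ^ 3 + (a₁ + a₂ + 4 * b) * h ^ 4|
              + |(a₁ + a₂ + 4 * b) * h ^ 4| := by
            have he : 4 * (a₂ - a₁) * h ^ 3
                = (4 * 0 * h ^ 2 + 4 * (a₂ - a₁) * h ^ 3 + (a₁ + a₂ + 4 * b) * h ^ 4)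
                  - (a₁ + a₂ + 4 * b) * h ^ 4 := by ring
            conv_lhs => rw [he, sub_eq_add_neg]
            exact (abs_add_le _ _).trans (by rw [abs_neg])
          have t2 : |(a₁ + a₂ + 4 * b) * h ^ 4| = |a₁ + a₂ + 4 * b| * h ^ 4 := by
            rw [abs_mul, abs_of_nonneg (by positivity : (0:ℝ) ≤ h ^ 4)]
          calc |4 * (a₂ - a₁) * h ^ 3|
              ≤ |4 * 0 * h ^ 2 + 4 * (a₂ - a₁) * h ^ 3 + (a₁ + a₂ + 4 * b) * h ^ 4|
                + |(a₁ + a₂ + 4 * b) * h ^ 4| := t1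
            _ ≤ C' * h ^ 4 + |a₁ + a₂ + 4 * b| * h ^ 4 := by rw [t2]; linarith
            _ = (C' + |a₁ + a₂ + 4 * b|) * h ^ 4 := by ring
        rw [abs_mul, abs_of_nonneg (by positivity : (0:ℝ) ≤ h ^ 3)] at hB'
        have : |4 * (a₂ - a₁)| ≤ (C' + |a₁ + a₂ + 4 * b|) * h := by
          have := mul_le_mul_of_nonneg_right hB' (by positivity : (0:ℝ) ≤ (h ^ 3)⁻¹)
          calc |4 * (a₂ - a₁)| = |4 * (a₂ - a₁)| * h ^ 3 * (h ^ 3)⁻¹ := by field_simp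
            _ ≤ (C' + |a₁ + a₂ + 4 * b|) * h ^ 4 * (h ^ 3)⁻¹ := this
            _ = (C' + |a₁ + a₂ + 4 * b|) * h := by field_simp
        calc |4 * (a₂ - a₁)| ≤ (C' + |a₁ + a₂ + 4 * b|) * h := this
          _ ≤ (C' + |a₁ + a₂ + 4 * b| + 1) * h := by nlinarith
      linarith
    constructor <;> linarith
  · -- backward direction
    intro f hf xj
    obtain ⟨M, hM, hMb⟩ := second_diff_bound f hf xj
    refine ⟨|(a₁ + 2 * b) / 2| * (2 * M) ^ 2 + 1, by positivity, 1, one_pos, fun h hh hh1 => ?_⟩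
    have hD := hMb h hh hh1
    have heq : a₁ * (f xj - f (xj - h)) ^ 2 + a₂ * (f (xj + h) - f xj) ^ 2
        + a₃ * (f (xj + h) - f (xj - h)) ^ 2
        + b * (f (xj + h) - 2 * f xj + f (xj - h)) ^ 2
        = ((a₁ + 2 * b) / 2) * (f (xj + h) - 2 * f xj + f (xj - h)) ^ 2 := by
      subst h12; rw [h3]; ring
    rw [heq, abs_mul, abs_pow]
    have hD2 : |f (xj + h) - 2 * f xj + f (xj - h)| ^ 2 ≤ (M * h ^ 2) ^ 2 := by
      apply pow_le_pow_left₀ (abs_nonneg _) hD 2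
    calc |(a₁ + 2 * b) / 2| * |f (xj + h) - 2 * f xj + f (xj - h)| ^ 2
        ≤ |(a₁ + 2 * b) / 2| * (M * h ^ 2) ^ 2 := by
          exact mul_le_mul_of_nonneg_left hD2 (abs_nonneg _)
      _ = |(a₁ + 2 * b) / 2| * M ^ 2 * h ^ 4 := by ring
      _ ≤ (|(a₁ + 2 * b) / 2| * (2 * M) ^ 2 + 1) * h ^ 4 := by nlinarith [abs_nonneg ((a₁ + 2 * b) / 2), pow_pos hh 4]
  · rintro ⟨h12, h3⟩ u v w
    subst h12; rw [h3]; ring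
  · rintro ⟨h12, h3, h4⟩ u v w
    subst h12; rw [h3, h4]; ring
end

section
/- Consider τ* = a₁(f_j − f_{j-1})² + a₂(f_{j+1} − f_j)² + a₃(f_{j+1} − f_{j-1})² + b(f_{j+1} − 2f_j + f_{j-1})² with f smooth. τ* = O(Δx³) (i.e. the Δx² term of its Taylor expansion at x_j vanishes for all f) if and only if a₃ = −(a₁ + a₂)/4. Moreover, if a₂ = −a₁ = a then a₃ = 0 and τ* = a(f_{j+1} − f_{j-1})(f_{j+1} − 2f_j + f_{j-1}) + b(f_{j+1} − 2f_j + f_{j-1})². -/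
lemma aux_bounds (f : ℝ → ℝ) (hf : ContDiff ℝ (⊤ : ℕ∞) f) (xj : ℝ) :
    ∃ M₁ > (0:ℝ), ∃ M₂ > (0:ℝ), ∀ h : ℝ, 0 < h → h < 1 →
      |f xj - f (xj - h)| ≤ M₁ * h ∧ |f (xj + h) - f xj| ≤ M₁ * h ∧
      |f (xj + h) - 2 * f xj + f (xj - h)| ≤ M₂ * h ^ 2 := by
  have hf1 : ContDiff ℝ (⊤ : ℕ∞) f := hf.of_le (by simp)
  obtain ⟨hd, hfd⟩ := contDiff_infty_iff_deriv.mp hf1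
  obtain ⟨hd2, hfd2⟩ := contDiff_infty_iff_deriv.mp hfd
  have hcont1 : Continuous (deriv f) := hd2.continuous
  have hcont2 : Continuous (deriv (deriv f)) := (hfd2.differentiable (by simp)).continuous
  set s : Set ℝ := Set.Icc (xj - 1) (xj + 1) with hs
  obtain ⟨C₁, hC₁⟩ := isCompact_Icc.exists_bound_of_continuousOn (s := s) hcont1.continuousOn
  obtain ⟨C₂, hC₂⟩ := isCompact_Icc.exists_bound_of_continuousOn (s := s) hcont2.continuousOn
  set K₁ : ℝ := |C₁| + 1 with hK₁
  set K₂ : ℝ := |C₂| + 1 with hK₂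
  have hK₁pos : 0 < K₁ := by positivity
  have hK₂pos : 0 < K₂ := by positivity
  have L1 : ∀ x ∈ s, ∀ y ∈ s, |f y - f x| ≤ K₁ * |y - x| := by
    intro x hx y hy
    have := Convex.norm_image_sub_le_of_norm_deriv_le (f := f) (s := s) (C := K₁)
      (fun z _ => (hd z))
      (fun z hz => le_trans (hC₁ z hz) (le_trans (le_abs_self _) (by simp [hK₁])))
      (convex_Icc _ _) hx hy
    simpa [Real.norm_eq_abs] using this
  have L2 : ∀ x ∈ s, ∀ y ∈ s, |deriv f y - deriv f x| ≤ K₂ * |y - x| := by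
    intro x hx y hy
    have := Convex.norm_image_sub_le_of_norm_deriv_le (f := deriv f) (s := s) (C := K₂)
      (fun z _ => (hd2 z))
      (fun z hz => le_trans (hC₂ z hz) (le_trans (le_abs_self _) (by simp [hK₂])))
      (convex_Icc _ _) hx hy
    simpa [Real.norm_eq_abs] using this
  refine ⟨K₁, hK₁pos, 2 * K₂, by positivity, ?_⟩
  intro h h0 h1
  have hm1 : xj - h ∈ s := by constructor <;> simp [hs] <;> linarith
  have hm2 : xj ∈ s := by constructor <;> simp [hs] <;> linarith
  have hm3 : xj + h ∈ s := by constructor <;> simp [hs] <;> linarith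
  refine ⟨?_, ?_, ?_⟩
  · have := L1 _ hm1 _ hm2
    have he : |xj - (xj - h)| = h := by rw [abs_of_pos] <;> [skip; linarith] ; ring_nf
    rw [he] at this; exact this
  · have := L1 _ hm2 _ hm3
    have he : |xj + h - xj| = h := by rw [abs_of_pos] <;> [skip; linarith] ; ring_nf
    rw [he] at this; exact this
  · set g : ℝ → ℝ := fun t => f (xj + t) + f (xj - t) with hg
    have hgd : ∀ t : ℝ, HasDerivAt g (deriv f (xj + t) - deriv f (xj - t)) t := by
      intro t
      have h1 : HasDerivAt (fun t => f (xj + t)) (deriv f (xj + t)) t := by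
        simpa [Function.comp_def] using (HasDerivAt.comp t (hd (xj + t)).hasDerivAt
          ((hasDerivAt_id t).const_add xj))
      have h2 : HasDerivAt (fun t => f (xj - t)) (-deriv f (xj - t)) t := by
        simpa [Function.comp_def] using (HasDerivAt.comp t (hd (xj - t)).hasDerivAt
          ((hasDerivAt_id t).const_sub xj))
      have := h1.add h2; rw [← sub_eq_add_neg] at this; exact this
    have hbound : ∀ t ∈ Set.Icc (0:ℝ) h, ‖deriv g t‖ ≤ K₂ * (2 * h) := by
      intro t ht
      obtain ⟨ht0, hth⟩ := ht
      have hmem1 : xj - t ∈ s := by constructor <;> simp [hs] <;> linarith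
      have hmem2 : xj + t ∈ s := by constructor <;> simp [hs] <;> linarith
      have := L2 _ hmem1 _ hmem2
      have he : |xj + t - (xj - t)| = 2 * t := by rw [abs_of_nonneg] <;> [skip; linarith]; ring
      rw [he] at this
      rw [(hgd t).deriv, Real.norm_eq_abs]
      calc |deriv f (xj + t) - deriv f (xj - t)| ≤ K₂ * (2 * t) := this
        _ ≤ K₂ * (2 * h) := by nlinarith
    have key := Convex.norm_image_sub_le_of_norm_deriv_le (f := g) (s := Set.Icc (0:ℝ) h)
      (C := K₂ * (2 * h)) (fun z _ => (hgd z).differentiableAt) hbound (convex_Icc _ _)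
      (Set.left_mem_Icc.mpr h0.le) (Set.right_mem_Icc.mpr h0.le)
    have he1 : g h - g 0 = f (xj + h) - 2 * f xj + f (xj - h) := by simp [hg]; ring
    have he2 : ‖h - 0‖ = h := by rw [sub_zero, Real.norm_eq_abs, abs_of_pos h0]
    rw [he1, he2, Real.norm_eq_abs] at key
    calc |f (xj + h) - 2 * f xj + f (xj - h)| ≤ K₂ * (2 * h) * h := key
      _ = 2 * K₂ * h ^ 2 := by ring
/-- Characterization of the quadratic ansatz τ* that is O(Δx³) for every smooth f:
this holds iff a₃ = −(a₁+a₂)/4; moreover if a₂ = −a₁ then a₃ = 0 and τ* factors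
as a(f_{j+1}−f_{j-1})(f_{j+1}−2f_j+f_{j-1}) + b(f_{j+1}−2f_j+f_{j-1})². -/
theorem stmt9 (a₁ a₂ a₃ b : ℝ) :
    ((∀ f : ℝ → ℝ, ContDiff ℝ (⊤ : ℕ∞) f → ∀ xj : ℝ, ∃ C > 0, ∃ δ > 0, ∀ h : ℝ, 0 < h → h < δ →
        |a₁ * (f xj - f (xj - h)) ^ 2 + a₂ * (f (xj + h) - f xj) ^ 2
          + a₃ * (f (xj + h) - f (xj - h)) ^ 2
          + b * (f (xj + h) - 2 * f xj + f (xj - h)) ^ 2| ≤ C * h ^ 3)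
      ↔ a₃ = -(a₁ + a₂) / 4) ∧
    ((a₂ = -a₁ ∧ a₃ = -(a₁ + a₂) / 4) →
      a₃ = 0 ∧
      ∀ u v w : ℝ, a₁ * (v - u) ^ 2 + a₂ * (w - v) ^ 2 + a₃ * (w - u) ^ 2
          + b * (w - 2 * v + u) ^ 2
        = a₂ * (w - u) * (w - 2 * v + u) + b * (w - 2 * v + u) ^ 2) := by
  constructor
  · constructor
    · -- forward: plug in f = id at xj = 0
      intro H
      obtain ⟨C, hC, δ, hδ, hb⟩ := H id contDiff_id 0
      by_contra hne
      set k : ℝ := a₁ + a₂ + 4 * a₃ with hk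
      have hk0 : k ≠ 0 := by intro h; apply hne; rw [hk] at h; linarith
      have hkpos : 0 < |k| := abs_pos.mpr hk0
      set h0 : ℝ := min (δ / 2) (|k| / (2 * C)) with hh0
      have h0pos : 0 < h0 := lt_min (by linarith) (by positivity)
      have h0lt : h0 < δ := lt_of_le_of_lt (min_le_left _ _) (by linarith)
      have hb' := hb h0 h0pos h0lt
      simp only [id_eq] at hb'
      have heq : |a₁ * (0 - (0 - h0)) ^ 2 + a₂ * (0 + h0 - 0) ^ 2 + a₃ * (0 + h0 - (0 - h0)) ^ 2
          + b * (0 + h0 - 2 * 0 + (0 - h0)) ^ 2| = |k| * h0 ^ 2 := by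
        rw [show a₁ * (0 - (0 - h0)) ^ 2 + a₂ * (0 + h0 - 0) ^ 2 + a₃ * (0 + h0 - (0 - h0)) ^ 2
          + b * (0 + h0 - 2 * 0 + (0 - h0)) ^ 2 = k * h0 ^ 2 by rw [hk]; ring,
          abs_mul, abs_of_pos (by positivity : (0:ℝ) < h0 ^ 2)]
      rw [heq] at hb'
      have hkle : |k| ≤ C * h0 := by
        have h2 : |k| * h0 ^ 2 ≤ (C * h0) * h0 ^ 2 := by nlinarith
        exact le_of_mul_le_mul_right h2 (by positivity)
      have : C * h0 ≤ |k| / 2 := by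
        have := min_le_right (δ / 2) (|k| / (2 * C))
        calc C * h0 ≤ C * (|k| / (2 * C)) := by nlinarith
          _ = |k| / 2 := by field_simp
      linarith
    · -- backward
      intro ha₃ f hf xj
      obtain ⟨M₁, hM₁, M₂, hM₂, hB⟩ := aux_bounds f hf xj
      refine ⟨M₂ * (M₁ * (|a₁| + |a₂|) + |b| * M₂) + 1, by positivity, 1, one_pos, ?_⟩
      intro h h0 h1
      obtain ⟨hp, hq, hqp⟩ := hB h h0 h1
      set P : ℝ := f xj - f (xj - h) with hP
      set Q : ℝ := f (xj + h) - f xj with hQ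
      have hE : a₁ * (f xj - f (xj - h)) ^ 2 + a₂ * (f (xj + h) - f xj) ^ 2
          + a₃ * (f (xj + h) - f (xj - h)) ^ 2
          + b * (f (xj + h) - 2 * f xj + f (xj - h)) ^ 2
          = (Q - P) * ((a₂ * (P + 3 * Q) - a₁ * (3 * P + Q)) / 4 + b * (Q - P)) := by
        rw [ha₃, hP, hQ]; ring
      have hQP : |Q - P| ≤ M₂ * h ^ 2 := by
        have : Q - P = f (xj + h) - 2 * f xj + f (xj - h) := by rw [hP, hQ]; ring
        rw [this]; exact hqp
      have habs1 : |P + 3 * Q| ≤ 4 * (M₁ * h) := by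
        calc |P + 3 * Q| ≤ |P| + |3 * Q| := abs_add_le _ _
          _ = |P| + 3 * |Q| := by rw [abs_mul]; norm_num
          _ ≤ 4 * (M₁ * h) := by linarith
      have habs2 : |3 * P + Q| ≤ 4 * (M₁ * h) := by
        calc |3 * P + Q| ≤ |3 * P| + |Q| := abs_add_le _ _
          _ = 3 * |P| + |Q| := by rw [abs_mul]; norm_num
          _ ≤ 4 * (M₁ * h) := by linarith
      have hinner : |(a₂ * (P + 3 * Q) - a₁ * (3 * P + Q)) / 4 + b * (Q - P)|
          ≤ M₁ * (|a₁| + |a₂|) * h + |b| * (M₂ * h ^ 2) := by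
        calc |(a₂ * (P + 3 * Q) - a₁ * (3 * P + Q)) / 4 + b * (Q - P)|
            ≤ |(a₂ * (P + 3 * Q) - a₁ * (3 * P + Q)) / 4| + |b * (Q - P)| := abs_add_le _ _
          _ = |a₂ * (P + 3 * Q) - a₁ * (3 * P + Q)| / 4 + |b| * |Q - P| := by
              rw [abs_div, abs_mul]; norm_num
          _ ≤ (|a₂ * (P + 3 * Q)| + |a₁ * (3 * P + Q)|) / 4 + |b| * (M₂ * h ^ 2) := by
              have h1 : |a₂ * (P + 3 * Q) - a₁ * (3 * P + Q)|
                  ≤ |a₂ * (P + 3 * Q)| + |a₁ * (3 * P + Q)| := abs_sub _ _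
              have h2 : |b| * |Q - P| ≤ |b| * (M₂ * h ^ 2) := by
                have := abs_nonneg b; nlinarith
              linarith
          _ = (|a₂| * |P + 3 * Q| + |a₁| * |3 * P + Q|) / 4 + |b| * (M₂ * h ^ 2) := by
              rw [abs_mul, abs_mul]
          _ ≤ (|a₂| * (4 * (M₁ * h)) + |a₁| * (4 * (M₁ * h))) / 4 + |b| * (M₂ * h ^ 2) := by
              have g1 : |a₂| * |P + 3 * Q| ≤ |a₂| * (4 * (M₁ * h)) :=
                mul_le_mul_of_nonneg_left habs1 (abs_nonneg _)
              have g2 : |a₁| * |3 * P + Q| ≤ |a₁| * (4 * (M₁ * h)) :=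
                mul_le_mul_of_nonneg_left habs2 (abs_nonneg _)
              linarith
          _ = M₁ * (|a₁| + |a₂|) * h + |b| * (M₂ * h ^ 2) := by ring
      rw [hE, abs_mul]
      have hinn_nn : (0:ℝ) ≤ |(a₂ * (P + 3 * Q) - a₁ * (3 * P + Q)) / 4 + b * (Q - P)| :=
        abs_nonneg _
      calc |Q - P| * |(a₂ * (P + 3 * Q) - a₁ * (3 * P + Q)) / 4 + b * (Q - P)|
          ≤ (M₂ * h ^ 2) * (M₁ * (|a₁| + |a₂|) * h + |b| * (M₂ * h ^ 2)) := by
            apply mul_le_mul hQP hinner hinn_nn (by positivity)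
        _ = M₂ * M₁ * (|a₁| + |a₂|) * h ^ 3 + |b| * M₂ ^ 2 * h ^ 4 := by ring
        _ ≤ M₂ * M₁ * (|a₁| + |a₂|) * h ^ 3 + |b| * M₂ ^ 2 * h ^ 3 := by
            have h43 : h ^ 4 ≤ h ^ 3 := pow_le_pow_of_le_one h0.le h1.le (by norm_num)
            have t1 : |b| * M₂ ^ 2 * h ^ 4 ≤ |b| * M₂ ^ 2 * h ^ 3 :=
              mul_le_mul_of_nonneg_left h43 (by positivity)
            linarith
        _ ≤ (M₂ * (M₁ * (|a₁| + |a₂|) + |b| * M₂) + 1) * h ^ 3 := by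
            nlinarith [pow_pos h0 3]
  · rintro ⟨h2, h3⟩
    subst h2
    have h30 : a₃ = 0 := by rw [h3]; ring
    exact ⟨h30, fun u v w => by rw [h30]; ring⟩
end

section
/- There is no nonzero quadratic form τ(f) = (f_{j-1}, f_j, f_{j+1}) A (f_{j-1}, f_j, f_{j+1})ᵀ, with A a 3×3 real matrix, such that for every smooth f with a first-order critical point at x_c = x_j + λΔx (f'(x_c) = 0, f''(x_c) ≠ 0, f'''(x_c) ≠ 0), with λ ∈ (-1,1) arbitrary, the Taylor expansion of τ(f) about x_c has leading error O(Δx⁵). Requiring the coefficients of Δx⁰ through Δx⁴ to vanish identically in λ and the derivatives of f forces τ(f) = 0. -/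
open Filter Set

set_option maxHeartbeats 2000000

/-- If `g` tends to `L` from the right of `0` and `|g h| ≤ C * h ^ n` (with `n ≥ 1`)
on `(0, δ)`, then `L = 0`. -/
lemma squeeze_zero_aux {g : ℝ → ℝ} {L C δ : ℝ} (n : ℕ) (hn : 0 < n) (hδ : 0 < δ)
    (hg : Tendsto g (nhdsWithin 0 (Set.Ioi 0)) (nhds L))
    (H : ∀ h : ℝ, 0 < h → h < δ → |g h| ≤ C * h ^ n) : L = 0 := by
  have hbound : Tendsto (fun h : ℝ => C * h ^ n) (nhdsWithin 0 (Set.Ioi 0)) (nhds 0) := by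
    have hc : Continuous (fun h : ℝ => C * h ^ n) := by continuity
    have := hc.tendsto 0
    simp only [zero_pow hn.ne', mul_zero] at this
    exact this.mono_left nhdsWithin_le_nhds
  have habs : Tendsto (fun h => |g h|) (nhdsWithin 0 (Set.Ioi 0)) (nhds |L|) := hg.abs
  have hmem : Set.Ioo (0:ℝ) δ ∈ nhdsWithin (0:ℝ) (Set.Ioi 0) :=
    Ioo_mem_nhdsGT_of_mem ⟨le_refl _, hδ⟩
  have hle : |L| ≤ 0 := by
    refine le_of_tendsto_of_tendsto habs hbound ?_
    filter_upwards [hmem] with h hh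
    exact H h hh.1 hh.2
  exact abs_eq_zero.mp (le_antisymm hle (abs_nonneg _))

lemma poly_small {c0 c2 c3 c4 c5 c6 C δ : ℝ} (hδ : 0 < δ)
    (H : ∀ h : ℝ, 0 < h → h < δ →
      |c0 + c2*h^2 + c3*h^3 + c4*h^4 + c5*h^5 + c6*h^6| ≤ C * h ^ 5) :
    c0 = 0 ∧ c2 = 0 ∧ c3 = 0 ∧ c4 = 0 := by
  have cont : ∀ a b c d e : ℝ,
      Tendsto (fun h : ℝ => a + b*h + c*h^2 + d*h^3 + e*h^4)
        (nhdsWithin 0 (Set.Ioi 0)) (nhds a) := by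
    intro a b c d e
    have hc : Continuous (fun h : ℝ => a + b*h + c*h^2 + d*h^3 + e*h^4) := by continuity
    have := hc.tendsto 0
    norm_num at this
    exact this.mono_left nhdsWithin_le_nhds
  have e0 : c0 = 0 := by
    refine squeeze_zero_aux 5 (by norm_num) hδ ?_ H
    have := cont c0 0 c2 c3 c4
    -- not matching; do directly
    have hc : Continuous (fun h : ℝ => c0 + c2*h^2 + c3*h^3 + c4*h^4 + c5*h^5 + c6*h^6) := by
      continuity
    have h2 := hc.tendsto 0
    norm_num at h2
    exact h2.mono_left nhdsWithin_le_nhds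
  subst e0
  have H2 : ∀ h : ℝ, 0 < h → h < δ →
      |c2 + c3*h + c4*h^2 + c5*h^3 + c6*h^4| ≤ C * h ^ 3 := by
    intro h hp hd
    have h2 : (0:ℝ) < h^2 := by positivity
    rw [← mul_le_mul_iff_of_pos_right h2]
    have key := H h hp hd
    calc |c2 + c3*h + c4*h^2 + c5*h^3 + c6*h^4| * h^2
        = |(c2 + c3*h + c4*h^2 + c5*h^3 + c6*h^4) * h^2| := by
          rw [abs_mul, abs_of_pos h2]
      _ = |0 + c2*h^2 + c3*h^3 + c4*h^4 + c5*h^5 + c6*h^6| := by ring_nf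
      _ ≤ C * h ^ 5 := key
      _ = C * h ^ 3 * h ^ 2 := by ring
  have e2 : c2 = 0 := squeeze_zero_aux 3 (by norm_num) hδ (cont c2 c3 c4 c5 c6) H2
  subst e2
  have H3 : ∀ h : ℝ, 0 < h → h < δ →
      |c3 + c4*h + c5*h^2 + c6*h^3| ≤ C * h ^ 2 := by
    intro h hp hd
    rw [← mul_le_mul_iff_of_pos_right hp]
    have key := H2 h hp hd
    calc |c3 + c4*h + c5*h^2 + c6*h^3| * h
        = |(c3 + c4*h + c5*h^2 + c6*h^3) * h| := by rw [abs_mul, abs_of_pos hp]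
      _ = |0 + c3*h + c4*h^2 + c5*h^3 + c6*h^4| := by ring_nf
      _ ≤ C * h ^ 3 := key
      _ = C * h ^ 2 * h := by ring
  have e3 : c3 = 0 := by
    refine squeeze_zero_aux 2 (by norm_num) hδ ?_ H3
    have := cont c3 c4 c5 c6 0
    simpa using this.congr (by intro h; ring)
  subst e3
  have H4 : ∀ h : ℝ, 0 < h → h < δ →
      |c4 + c5*h + c6*h^2| ≤ C * h ^ 1 := by
    intro h hp hd
    rw [← mul_le_mul_iff_of_pos_right hp]
    have key := H3 h hp hd
    calc |c4 + c5*h + c6*h^2| * h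
        = |(c4 + c5*h + c6*h^2) * h| := by rw [abs_mul, abs_of_pos hp]
      _ = |0 + c4*h + c5*h^2 + c6*h^3| := by ring_nf
      _ ≤ C * h ^ 2 := key
      _ = C * h ^ 1 * h := by ring
  have e4 : c4 = 0 := by
    refine squeeze_zero_aux 1 (by norm_num) hδ ?_ H4
    have := cont c4 c5 c6 0 0
    simpa using this.congr (by intro h; ring)
  exact ⟨rfl, rfl, rfl, e4⟩

/-- Proposition 5: no nonzero quadratic form in (f_{j-1}, f_j, f_{j+1}) can have
leading error O(Δx⁵) at every first-order critical point x_c = x_j + λΔx with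
λ ∈ (-1,1); such a requirement forces the form to vanish identically. -/
theorem stmt10 (A : Matrix (Fin 3) (Fin 3) ℝ)
    (hA : ∀ f : ℝ → ℝ, ContDiff ℝ (⊤ : ℕ∞) f → ∀ lam ∈ Set.Ioo (-1 : ℝ) 1, ∀ xc : ℝ,
      deriv f xc = 0 → iteratedDeriv 2 f xc ≠ 0 → iteratedDeriv 3 f xc ≠ 0 →
      ∃ C > 0, ∃ δ > 0, ∀ h : ℝ, 0 < h → h < δ →
        |∑ i : Fin 3, ∑ j : Fin 3,
            (![f (xc - lam * h - h), f (xc - lam * h), f (xc - lam * h + h)] i) * A i j *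
            (![f (xc - lam * h - h), f (xc - lam * h), f (xc - lam * h + h)] j)|
          ≤ C * h ^ 5) :
    ∀ w : Fin 3 → ℝ, ∑ i : Fin 3, ∑ j : Fin 3, w i * A i j * w j = 0 := by
  have hf : ContDiff ℝ (⊤ : ℕ∞) (fun x : ℝ => 1 + x^2 + x^3) :=
    (contDiff_const.add (contDiff_id.pow 2)).add (contDiff_id.pow 3)
  have hder1 : ∀ x : ℝ, HasDerivAt (fun x : ℝ => 1 + x^2 + x^3) (2*x + 3*x^2) x := by
    intro x
    have := ((hasDerivAt_pow 2 x).const_add 1).add (hasDerivAt_pow 3 x)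
    refine this.congr_deriv ?_
    push_cast
    ring
  have hD1 : deriv (fun x : ℝ => 1 + x^2 + x^3) = fun x => 2*x + 3*x^2 :=
    funext fun x => (hder1 x).deriv
  have hder2 : ∀ x : ℝ, HasDerivAt (fun x : ℝ => 2*x + 3*x^2) (2 + 6*x) x := by
    intro x
    have := ((hasDerivAt_id x).const_mul 2).add ((hasDerivAt_pow 2 x).const_mul 3)
    refine this.congr_deriv ?_
    push_cast
    ring
  have hD2 : deriv (fun x : ℝ => 2*x + 3*x^2) = fun x => 2 + 6*x :=
    funext fun x => (hder2 x).deriv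
  have hder3 : ∀ x : ℝ, HasDerivAt (fun x : ℝ => 2 + 6*x) 6 x := by
    intro x
    have := ((hasDerivAt_id x).const_mul 6).const_add 2
    simpa using this
  have hd1 : deriv (fun x : ℝ => 1 + x^2 + x^3) 0 = 0 := by
    rw [hD1]; norm_num
  have hd2 : iteratedDeriv 2 (fun x : ℝ => 1 + x^2 + x^3) 0 ≠ 0 := by
    rw [show (2:ℕ) = 1 + 1 from rfl, iteratedDeriv_succ, iteratedDeriv_one, hD1, hD2]
    norm_num
  have hd3 : iteratedDeriv 3 (fun x : ℝ => 1 + x^2 + x^3) 0 ≠ 0 := by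
    rw [show (3:ℕ) = 1 + 1 + 1 from rfl, iteratedDeriv_succ, iteratedDeriv_succ,
      iteratedDeriv_one, hD1, hD2, funext fun x => (hder3 x).deriv]
    norm_num
  have key : ∀ lam : ℝ, -1 < lam → lam < 1 →
      (((1:ℝ)) * A 0 0 + ((1:ℝ)) * A 0 1 + ((1:ℝ)) * A 0 2 + ((1:ℝ)) * A 1 0 + ((1:ℝ)) * A 1 1 + ((1:ℝ)) * A 1 2 + ((1:ℝ)) * A 2 0 + ((1:ℝ)) * A 2 1 + ((1:ℝ)) * A 2 2) = 0 ∧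
      (((2:ℝ)*lam^2 + (4:ℝ)*lam + (2:ℝ)) * A 0 0 + ((2:ℝ)*lam^2 + (2:ℝ)*lam + (1:ℝ)) * A 0 1 + ((2:ℝ)*lam^2 + (2:ℝ)) * A 0 2 + ((2:ℝ)*lam^2 + (2:ℝ)*lam + (1:ℝ)) * A 1 0 + ((2:ℝ)*lam^2) * A 1 1 + ((2:ℝ)*lam^2 + (-2:ℝ)*lam + (1:ℝ)) * A 1 2 + ((2:ℝ)*lam^2 + (2:ℝ)) * A 2 0 + ((2:ℝ)*lam^2 + (-2:ℝ)*lam + (1:ℝ)) * A 2 1 + ((2:ℝ)*lam^2 + (-4:ℝ)*lam + (2:ℝ)) * A 2 2) = 0 ∧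
      (((-2:ℝ)*lam^3 + (-6:ℝ)*lam^2 + (-6:ℝ)*lam + (-2:ℝ)) * A 0 0 + ((-2:ℝ)*lam^3 + (-3:ℝ)*lam^2 + (-3:ℝ)*lam + (-1:ℝ)) * A 0 1 + ((-2:ℝ)*lam^3 + (-6:ℝ)*lam) * A 0 2 + ((-2:ℝ)*lam^3 + (-3:ℝ)*lam^2 + (-3:ℝ)*lam + (-1:ℝ)) * A 1 0 + ((-2:ℝ)*lam^3) * A 1 1 + ((-2:ℝ)*lam^3 + (3:ℝ)*lam^2 + (-3:ℝ)*lam + (1:ℝ)) * A 1 2 + ((-2:ℝ)*lam^3 + (-6:ℝ)*lam) * A 2 0 + ((-2:ℝ)*lam^3 + (3:ℝ)*lam^2 + (-3:ℝ)*lam + (1:ℝ)) * A 2 1 + ((-2:ℝ)*lam^3 + (6:ℝ)*lam^2 + (-6:ℝ)*lam + (2:ℝ)) * A 2 2) = 0 ∧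
      (((1:ℝ)*lam^4 + (4:ℝ)*lam^3 + (6:ℝ)*lam^2 + (4:ℝ)*lam + (1:ℝ)) * A 0 0 + ((1:ℝ)*lam^4 + (2:ℝ)*lam^3 + (1:ℝ)*lam^2) * A 0 1 + ((1:ℝ)*lam^4 + (-2:ℝ)*lam^2 + (1:ℝ)) * A 0 2 + ((1:ℝ)*lam^4 + (2:ℝ)*lam^3 + (1:ℝ)*lam^2) * A 1 0 + ((1:ℝ)*lam^4) * A 1 1 + ((1:ℝ)*lam^4 + (-2:ℝ)*lam^3 + (1:ℝ)*lam^2) * A 1 2 + ((1:ℝ)*lam^4 + (-2:ℝ)*lam^2 + (1:ℝ)) * A 2 0 + ((1:ℝ)*lam^4 + (-2:ℝ)*lam^3 + (1:ℝ)*lam^2) * A 2 1 + ((1:ℝ)*lam^4 + (-4:ℝ)*lam^3 + (6:ℝ)*lam^2 + (-4:ℝ)*lam + (1:ℝ)) * A 2 2) = 0 := by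
    intro lam hl1 hl2
    obtain ⟨C, hC, δ, hδ, H⟩ :=
      hA (fun x : ℝ => 1 + x^2 + x^3) hf lam ⟨hl1, hl2⟩ 0 hd1 hd2 hd3
    refine poly_small (c5 := (((-2:ℝ)*lam^5 + (-10:ℝ)*lam^4 + (-20:ℝ)*lam^3 + (-20:ℝ)*lam^2 + (-10:ℝ)*lam + (-2:ℝ)) * A 0 0 + ((-2:ℝ)*lam^5 + (-5:ℝ)*lam^4 + (-4:ℝ)*lam^3 + (-1:ℝ)*lam^2) * A 0 1 + ((-2:ℝ)*lam^5 + (4:ℝ)*lam^3 + (-2:ℝ)*lam) * A 0 2 + ((-2:ℝ)*lam^5 + (-5:ℝ)*lam^4 + (-4:ℝ)*lam^3 + (-1:ℝ)*lam^2) * A 1 0 + ((-2:ℝ)*lam^5) * A 1 1 + ((-2:ℝ)*lam^5 + (5:ℝ)*lam^4 + (-4:ℝ)*lam^3 + (1:ℝ)*lam^2) * A 1 2 + ((-2:ℝ)*lam^5 + (4:ℝ)*lam^3 + (-2:ℝ)*lam) * A 2 0 + ((-2:ℝ)*lam^5 + (5:ℝ)*lam^4 + (-4:ℝ)*lam^3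 + (1:ℝ)*lam^2) * A 2 1 + ((-2:ℝ)*lam^5 + (10:ℝ)*lam^4 + (-20:ℝ)*lam^3 + (20:ℝ)*lam^2 + (-10:ℝ)*lam + (2:ℝ)) * A 2 2))
      (c6 := (((1:ℝ)*lam^6 + (6:ℝ)*lam^5 + (15:ℝ)*lam^4 + (20:ℝ)*lam^3 + (15:ℝ)*lam^2 + (6:ℝ)*lam + (1:ℝ)) * A 0 0 + ((1:ℝ)*lam^6 + (3:ℝ)*lam^5 + (3:ℝ)*lam^4 + (1:ℝ)*lam^3) * A 0 1 + ((1:ℝ)*lam^6 + (-3:ℝ)*lam^4 + (3:ℝ)*lam^2 + (-1:ℝ)) * A 0 2 + ((1:ℝ)*lam^6 + (3:ℝ)*lam^5 + (3:ℝ)*lam^4 + (1:ℝ)*lam^3) * A 1 0 + ((1:ℝ)*lam^6) * A 1 1 + ((1:ℝ)*lam^6 + (-3:ℝ)*lam^5 + (3:ℝ)*lam^4 + (-1:ℝ)*lam^3) * A 1 2 + ((1:ℝ)*lam^6 + (-3:ℝ)*lam^4 + (3:ℝ)*lam^2 + (-1:ℝ)) * A 2 0 + ((1:ℝ)*lam^6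 + (-3:ℝ)*lam^5 + (3:ℝ)*lam^4 + (-1:ℝ)*lam^3) * A 2 1 + ((1:ℝ)*lam^6 + (-6:ℝ)*lam^5 + (15:ℝ)*lam^4 + (-20:ℝ)*lam^3 + (15:ℝ)*lam^2 + (-6:ℝ)*lam + (1:ℝ)) * A 2 2))
      (C := C) hδ ?_
    intro h hp hd
    have hH := H h hp hd
    have heq : (∑ i : Fin 3, ∑ j : Fin 3,
        (![(fun x : ℝ => 1 + x^2 + x^3) (0 - lam * h - h),
           (fun x : ℝ => 1 + x^2 + x^3) (0 - lam * h),
           (fun x : ℝ => 1 + x^2 + x^3) (0 - lam * h + h)] i) * A i j *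
        (![(fun x : ℝ => 1 + x^2 + x^3) (0 - lam * h - h),
           (fun x : ℝ => 1 + x^2 + x^3) (0 - lam * h),
           (fun x : ℝ => 1 + x^2 + x^3) (0 - lam * h + h)] j)) =
        (((1:ℝ)) * A 0 0 + ((1:ℝ)) * A 0 1 + ((1:ℝ)) * A 0 2 + ((1:ℝ)) * A 1 0 + ((1:ℝ)) * A 1 1 + ((1:ℝ)) * A 1 2 + ((1:ℝ)) * A 2 0 + ((1:ℝ)) * A 2 1 + ((1:ℝ)) * A 2 2)
        + (((2:ℝ)*lam^2 + (4:ℝ)*lam + (2:ℝ)) * A 0 0 + ((2:ℝ)*lam^2 + (2:ℝ)*lam + (1:ℝ)) * A 0 1 + ((2:ℝ)*lam^2 + (2:ℝ)) * A 0 2 + ((2:ℝ)*lam^2 + (2:ℝ)*lam + (1:ℝ)) * A 1 0 + ((2:ℝ)*lam^2) * A 1 1 + ((2:ℝ)*lam^2 + (-2:ℝ)*lam + (1:ℝ)) * A 1 2 + ((2:ℝ)*lam^2 + (2:ℝ)) * A 2 0 + ((2:ℝ)*lam^2 + (-2:ℝ)*lam + (1:ℝ)) * A 2 1 + ((2:ℝ)*lam^2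 + (-4:ℝ)*lam + (2:ℝ)) * A 2 2) * h^2
        + (((-2:ℝ)*lam^3 + (-6:ℝ)*lam^2 + (-6:ℝ)*lam + (-2:ℝ)) * A 0 0 + ((-2:ℝ)*lam^3 + (-3:ℝ)*lam^2 + (-3:ℝ)*lam + (-1:ℝ)) * A 0 1 + ((-2:ℝ)*lam^3 + (-6:ℝ)*lam) * A 0 2 + ((-2:ℝ)*lam^3 + (-3:ℝ)*lam^2 + (-3:ℝ)*lam + (-1:ℝ)) * A 1 0 + ((-2:ℝ)*lam^3) * A 1 1 + ((-2:ℝ)*lam^3 + (3:ℝ)*lam^2 + (-3:ℝ)*lam + (1:ℝ)) * A 1 2 + ((-2:ℝ)*lam^3 + (-6:ℝ)*lam) * A 2 0 + ((-2:ℝ)*lam^3 + (3:ℝ)*lam^2 + (-3:ℝ)*lam + (1:ℝ)) * A 2 1 + ((-2:ℝ)*lam^3 + (6:ℝ)*lam^2 + (-6:ℝ)*lam + (2:ℝ)) * A 2 2) * h^3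
        + (((1:ℝ)*lam^4 + (4:ℝ)*lam^3 + (6:ℝ)*lam^2 + (4:ℝ)*lam + (1:ℝ)) * A 0 0 + ((1:ℝ)*lam^4 + (2:ℝ)*lam^3 + (1:ℝ)*lam^2) * A 0 1 + ((1:ℝ)*lam^4 + (-2:ℝ)*lam^2 + (1:ℝ)) * A 0 2 + ((1:ℝ)*lam^4 + (2:ℝ)*lam^3 + (1:ℝ)*lam^2) * A 1 0 + ((1:ℝ)*lam^4) * A 1 1 + ((1:ℝ)*lam^4 + (-2:ℝ)*lam^3 + (1:ℝ)*lam^2) * A 1 2 + ((1:ℝ)*lam^4 + (-2:ℝ)*lam^2 + (1:ℝ)) * A 2 0 + ((1:ℝ)*lam^4 + (-2:ℝ)*lam^3 + (1:ℝ)*lam^2) * A 2 1 + ((1:ℝ)*lam^4 + (-4:ℝ)*lam^3 + (6:ℝ)*lam^2 + (-4:ℝ)*lam + (1:ℝ)) * A 2 2) * h^4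
        + (((-2:ℝ)*lam^5 + (-10:ℝ)*lam^4 + (-20:ℝ)*lam^3 + (-20:ℝ)*lam^2 + (-10:ℝ)*lam + (-2:ℝ)) * A 0 0 + ((-2:ℝ)*lam^5 + (-5:ℝ)*lam^4 + (-4:ℝ)*lam^3 + (-1:ℝ)*lam^2) * A 0 1 + ((-2:ℝ)*lam^5 + (4:ℝ)*lam^3 + (-2:ℝ)*lam) * A 0 2 + ((-2:ℝ)*lam^5 + (-5:ℝ)*lam^4 + (-4:ℝ)*lam^3 + (-1:ℝ)*lam^2) * A 1 0 + ((-2:ℝ)*lam^5) * A 1 1 + ((-2:ℝ)*lam^5 + (5:ℝ)*lam^4 + (-4:ℝ)*lam^3 + (1:ℝ)*lam^2) * A 1 2 + ((-2:ℝ)*lam^5 + (4:ℝ)*lam^3 + (-2:ℝ)*lam) * A 2 0 + ((-2:ℝ)*lam^5 + (5:ℝ)*lam^4 + (-4:ℝ)*lam^3 + (1:ℝ)*lam^2) * A 2 1 + ((-2:ℝ)*lam^5 + (10:ℝ)*lam^4 + (-20:ℝ)*lam^3 + (20:ℝ)*lam^2 + (-10:ℝ)*lam + (2:ℝ)) * A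 2 2) * h^5
        + (((1:ℝ)*lam^6 + (6:ℝ)*lam^5 + (15:ℝ)*lam^4 + (20:ℝ)*lam^3 + (15:ℝ)*lam^2 + (6:ℝ)*lam + (1:ℝ)) * A 0 0 + ((1:ℝ)*lam^6 + (3:ℝ)*lam^5 + (3:ℝ)*lam^4 + (1:ℝ)*lam^3) * A 0 1 + ((1:ℝ)*lam^6 + (-3:ℝ)*lam^4 + (3:ℝ)*lam^2 + (-1:ℝ)) * A 0 2 + ((1:ℝ)*lam^6 + (3:ℝ)*lam^5 + (3:ℝ)*lam^4 + (1:ℝ)*lam^3) * A 1 0 + ((1:ℝ)*lam^6) * A 1 1 + ((1:ℝ)*lam^6 + (-3:ℝ)*lam^5 + (3:ℝ)*lam^4 + (-1:ℝ)*lam^3) * A 1 2 + ((1:ℝ)*lam^6 + (-3:ℝ)*lam^4 + (3:ℝ)*lam^2 + (-1:ℝ)) * A 2 0 + ((1:ℝ)*lam^6 + (-3:ℝ)*lam^5 + (3:ℝ)*lam^4 + (-1:ℝ)*lam^3) * A 2 1 + ((1:ℝ)*lam^6 + (-6:ℝ)*lam^5 + (15:ℝ)*lam^4 + (-20:ℝ)*lam^3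 + (15:ℝ)*lam^2 + (-6:ℝ)*lam + (1:ℝ)) * A 2 2) * h^6 := by
      simp only [Fin.sum_univ_three, Matrix.cons_val_zero, Matrix.cons_val_one,
        Matrix.head_cons, Matrix.cons_val_two, Matrix.tail_cons]
      ring
    rw [heq] at hH
    exact hH
  have k1 := key 0 (by norm_num) (by norm_num)
  have k2 := key (1/2) (by norm_num) (by norm_num)
  have k3 := key (-1/2) (by norm_num) (by norm_num)
  have k4 := key (1/4) (by norm_num) (by norm_num)
  have k5 := key (-1/4) (by norm_num) (by norm_num)
  obtain ⟨e10, e12, e13, e14⟩ := k1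
  obtain ⟨e20, e22, e23, e24⟩ := k2
  obtain ⟨e30, e32, e33, e34⟩ := k3
  obtain ⟨e40, e42, e43, e44⟩ := k4
  obtain ⟨e50, e52, e53, e54⟩ := k5
  norm_num at e12 e13 e14 e22 e23 e24 e32 e33 e34 e42 e43 e44 e52 e53 e54
  have h00 : A 0 0 = 0 := by linarith
  have h11 : A 1 1 = 0 := by linarith
  have h22 : A 2 2 = 0 := by linarith
  have h01 : A 0 1 + A 1 0 = 0 := by linarith
  have h02 : A 0 2 + A 2 0 = 0 := by linarith
  have h12 : A 1 2 + A 2 1 = 0 := by linarith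
  intro w
  simp only [Fin.sum_univ_three]
  linear_combination (w 0 * w 0) * h00 + (w 1 * w 1) * h11 + (w 2 * w 2) * h22 +
    (w 0 * w 1) * h01 + (w 0 * w 2) * h02 + (w 1 * w 2) * h12
end

section
/- Let f be smooth with a first-order critical point at x_c = x_j + λΔx, f'(x_c) = 0, f''(x_c) ≠ 0, f'''(x_c) ≠ 0, and define τ_{CP₁}(f) = (1/4)(−f_{j+2} + 3f_{j+1} + 21f_j − 23f_{j-1})(f_{j+2} − 3f_{j+1} + 3f_j − f_{j-1}) with f_k = f(x_j + kΔx). Then: (i) for λ ≠ −1/2, τ_{CP₁} = (−6λ−3) f''(x_c) f'''(x_c) Δx⁵ + O(Δx⁶); (ii) for λ = −1/2, τ_{CP₁} = −(1/4) f'''(x_j) f⁽⁴⁾(x_j) Δx⁷ + O(Δx⁸). -/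
open Set

private lemma abs_le_of_mem_uIcc0 {t x : ℝ} (hx : x ∈ Set.uIcc 0 t) : |x| ≤ |t| := by
  rcases Set.mem_uIcc.1 hx with ⟨ha, hb⟩ | ⟨ha, hb⟩
  · rw [abs_of_nonneg ha]; exact hb.trans (le_abs_self t)
  · rw [abs_of_nonpos hb]; exact (neg_le_neg ha).trans (neg_le_abs t)

private lemma mvt_step {φ ψ : ℝ → ℝ} {C : ℝ} {k m : ℕ} (hC : 0 ≤ C) (hφ0 : φ 0 = 0)
    (hd : ∀ s : ℝ, HasDerivAt φ (ψ s) s)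
    (hψ : ∀ s : ℝ, |s| ≤ 1 → |ψ s| ≤ C * |s| ^ k) (hm : m = k + 1) :
    ∀ t : ℝ, |t| ≤ 1 → |φ t| ≤ C * |t| ^ m := by
  intro t ht
  have key := Convex.norm_image_sub_le_of_norm_hasDerivWithin_le
    (f := φ) (f' := ψ) (s := Set.uIcc 0 t) (C := C * |t| ^ k) (x := 0) (y := t)
    (fun x _ => (hd x).hasDerivWithinAt)
    (fun x hx => by
      have h1 : |x| ≤ |t| := abs_le_of_mem_uIcc0 hx
      have h2 : |ψ x| ≤ C * |x| ^ k := hψ x (h1.trans ht)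
      refine le_trans (by simpa using h2) ?_
      exact mul_le_mul_of_nonneg_left (pow_le_pow_left₀ (abs_nonneg x) h1 k) hC)
    (convex_uIcc 0 t) Set.left_mem_uIcc Set.right_mem_uIcc
  simp only [Real.norm_eq_abs, hφ0, sub_zero] at key
  calc |φ t| ≤ C * |t| ^ k * |t| := key
    _ = C * |t| ^ m := by rw [hm, pow_succ]; ring

private lemma hasDerivAt_iteratedDeriv {f : ℝ → ℝ} (hf : ContDiff ℝ (⊤ : ℕ∞) f) (k : ℕ) (x : ℝ) :
    HasDerivAt (iteratedDeriv k f) (iteratedDeriv (k + 1) f x) x := by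
  have hdiff : Differentiable ℝ (iteratedDeriv k f) :=
    hf.differentiable_iteratedDeriv k (by exact_mod_cast ENat.coe_lt_top k)
  rw [iteratedDeriv_succ]
  exact (hdiff x).hasDerivAt

private lemma hasDerivAt_shift {f : ℝ → ℝ} (hf : ContDiff ℝ (⊤ : ℕ∞) f) (k : ℕ) (x₀ t : ℝ) :
    HasDerivAt (fun s => iteratedDeriv k f (x₀ + s)) (iteratedDeriv (k + 1) f (x₀ + t)) t := by
  have h := (hasDerivAt_iteratedDeriv hf k (x₀ + t)).comp t ((hasDerivAt_id t).const_add x₀)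
  exact h.congr_deriv (mul_one _)

private lemma taylor4 {f : ℝ → ℝ} (hf : ContDiff ℝ (⊤ : ℕ∞) f) (x₀ : ℝ) :
    ∃ M > 0, ∀ t : ℝ, |t| ≤ 1 →
      |f (x₀ + t) - (f x₀ + iteratedDeriv 1 f x₀ * t + iteratedDeriv 2 f x₀ * t ^ 2 / 2
          + iteratedDeriv 3 f x₀ * t ^ 3 / 6 + iteratedDeriv 4 f x₀ * t ^ 4 / 24)|
        ≤ M * |t| ^ 5 := by
  obtain ⟨M0, hM0⟩ := (isCompact_Icc (a := x₀ - 1) (b := x₀ + 1)).exists_bound_of_continuousOn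
    ((hf.continuous_iteratedDeriv 5 (by exact WithTop.coe_le_coe.2 le_top)).continuousOn)
  refine ⟨|M0| + 1, by positivity, ?_⟩
  have hMpos : (0:ℝ) < |M0| + 1 := by positivity
  have hM : ∀ s : ℝ, |s| ≤ 1 → |iteratedDeriv 5 f (x₀ + s)| ≤ (|M0| + 1) * |s| ^ 0 := by
    intro s hs
    have hmem : x₀ + s ∈ Icc (x₀ - 1) (x₀ + 1) := by
      rcases abs_le.1 hs with ⟨a, b⟩; constructor <;> linarith
    have := hM0 _ hmem
    simp only [Real.norm_eq_abs] at this
    have h2 := le_abs_self M0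
    simp only [pow_zero, mul_one]
    linarith
  have h4 : ∀ t : ℝ, |t| ≤ 1 →
      |iteratedDeriv 4 f (x₀ + t) - iteratedDeriv 4 f x₀| ≤ (|M0| + 1) * |t| ^ 1 := by
    refine mvt_step (ψ := fun s => iteratedDeriv 5 f (x₀ + s)) hMpos.le (by simp)
      (fun s => (hasDerivAt_shift hf 4 x₀ s).sub_const _) hM rfl
  have h3 : ∀ t : ℝ, |t| ≤ 1 →
      |iteratedDeriv 3 f (x₀ + t) - (iteratedDeriv 3 f x₀ + iteratedDeriv 4 f x₀ * t)|
        ≤ (|M0| + 1) * |t| ^ 2 := by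
    refine mvt_step (ψ := fun s => iteratedDeriv 4 f (x₀ + s) - iteratedDeriv 4 f x₀)
      hMpos.le (by simp) (fun s => ?_) h4 rfl
    have hb : HasDerivAt (fun t : ℝ => iteratedDeriv 3 f x₀ + iteratedDeriv 4 f x₀ * t)
        (iteratedDeriv 4 f x₀) s := by
      simpa using ((hasDerivAt_id' (x := s)).const_mul (iteratedDeriv 4 f x₀)).const_add
        (iteratedDeriv 3 f x₀)
    exact (hasDerivAt_shift hf 3 x₀ s).sub hb
  have h2 : ∀ t : ℝ, |t| ≤ 1 →
      |iteratedDeriv 2 f (x₀ + t) - (iteratedDeriv 2 f x₀ + iteratedDeriv 3 f x₀ * t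
          + iteratedDeriv 4 f x₀ * t ^ 2 / 2)| ≤ (|M0| + 1) * |t| ^ 3 := by
    refine mvt_step (ψ := fun s => iteratedDeriv 3 f (x₀ + s) -
      (iteratedDeriv 3 f x₀ + iteratedDeriv 4 f x₀ * s)) hMpos.le (by simp) (fun s => ?_) h3 rfl
    have hb : HasDerivAt (fun t : ℝ => iteratedDeriv 2 f x₀ + iteratedDeriv 3 f x₀ * t
        + iteratedDeriv 4 f x₀ * t ^ 2 / 2)
        (iteratedDeriv 3 f x₀ + iteratedDeriv 4 f x₀ * s) s := by
      have hc := ((hasDerivAt_const s (iteratedDeriv 2 f x₀)).add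
        ((hasDerivAt_id' (x := s)).const_mul (iteratedDeriv 3 f x₀))).add
        (((hasDerivAt_pow 2 s).const_mul (iteratedDeriv 4 f x₀)).div_const 2)
      refine hc.congr_deriv ?_
      push_cast; ring
    exact (hasDerivAt_shift hf 2 x₀ s).sub hb
  have h1 : ∀ t : ℝ, |t| ≤ 1 →
      |iteratedDeriv 1 f (x₀ + t) - (iteratedDeriv 1 f x₀ + iteratedDeriv 2 f x₀ * t
          + iteratedDeriv 3 f x₀ * t ^ 2 / 2 + iteratedDeriv 4 f x₀ * t ^ 3 / 6)|
        ≤ (|M0| + 1) * |t| ^ 4 := by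
    refine mvt_step (ψ := fun s => iteratedDeriv 2 f (x₀ + s) -
      (iteratedDeriv 2 f x₀ + iteratedDeriv 3 f x₀ * s + iteratedDeriv 4 f x₀ * s ^ 2 / 2))
      hMpos.le (by simp) (fun s => ?_) h2 rfl
    have hb : HasDerivAt (fun t : ℝ => iteratedDeriv 1 f x₀ + iteratedDeriv 2 f x₀ * t
        + iteratedDeriv 3 f x₀ * t ^ 2 / 2 + iteratedDeriv 4 f x₀ * t ^ 3 / 6)
        (iteratedDeriv 2 f x₀ + iteratedDeriv 3 f x₀ * s + iteratedDeriv 4 f x₀ * s ^ 2 / 2)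
        s := by
      have hc := (((hasDerivAt_const s (iteratedDeriv 1 f x₀)).add
        ((hasDerivAt_id' (x := s)).const_mul (iteratedDeriv 2 f x₀))).add
        (((hasDerivAt_pow 2 s).const_mul (iteratedDeriv 3 f x₀)).div_const 2)).add
        (((hasDerivAt_pow 3 s).const_mul (iteratedDeriv 4 f x₀)).div_const 6)
      refine hc.congr_deriv ?_
      push_cast; ring
    exact (hasDerivAt_shift hf 1 x₀ s).sub hb
  have h0 : ∀ t : ℝ, |t| ≤ 1 →
      |iteratedDeriv 0 f (x₀ + t) - (iteratedDeriv 0 f x₀ + iteratedDeriv 1 f x₀ * t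
          + iteratedDeriv 2 f x₀ * t ^ 2 / 2 + iteratedDeriv 3 f x₀ * t ^ 3 / 6
          + iteratedDeriv 4 f x₀ * t ^ 4 / 24)| ≤ (|M0| + 1) * |t| ^ 5 := by
    refine mvt_step (ψ := fun s => iteratedDeriv 1 f (x₀ + s) -
      (iteratedDeriv 1 f x₀ + iteratedDeriv 2 f x₀ * s + iteratedDeriv 3 f x₀ * s ^ 2 / 2
        + iteratedDeriv 4 f x₀ * s ^ 3 / 6)) hMpos.le (by simp) (fun s => ?_) h1 rfl
    have hb : HasDerivAt (fun t : ℝ => iteratedDeriv 0 f x₀ + iteratedDeriv 1 f x₀ * t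
        + iteratedDeriv 2 f x₀ * t ^ 2 / 2 + iteratedDeriv 3 f x₀ * t ^ 3 / 6
        + iteratedDeriv 4 f x₀ * t ^ 4 / 24)
        (iteratedDeriv 1 f x₀ + iteratedDeriv 2 f x₀ * s + iteratedDeriv 3 f x₀ * s ^ 2 / 2
          + iteratedDeriv 4 f x₀ * s ^ 3 / 6) s := by
      have hc := ((((hasDerivAt_const s (iteratedDeriv 0 f x₀)).add
        ((hasDerivAt_id' (x := s)).const_mul (iteratedDeriv 1 f x₀))).add
        (((hasDerivAt_pow 2 s).const_mul (iteratedDeriv 2 f x₀)).div_const 2)).add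
        (((hasDerivAt_pow 3 s).const_mul (iteratedDeriv 3 f x₀)).div_const 6)).add
        (((hasDerivAt_pow 4 s).const_mul (iteratedDeriv 4 f x₀)).div_const 24)
      refine hc.congr_deriv ?_
      push_cast; ring
    exact (hasDerivAt_shift hf 0 x₀ s).sub hb
  intro t ht
  have := h0 t ht
  simpa [iteratedDeriv_zero] using this

private lemma node_bound {f : ℝ → ℝ} {xc M : ℝ}
    (hg1 : iteratedDeriv 1 f xc = 0)
    (hT : ∀ t : ℝ, |t| ≤ 1 →
      |f (xc + t) - (f xc + iteratedDeriv 1 f xc * t + iteratedDeriv 2 f xc * t ^ 2 / 2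
          + iteratedDeriv 3 f xc * t ^ 3 / 6 + iteratedDeriv 4 f xc * t ^ 4 / 24)|
        ≤ M * |t| ^ 5)
    (hM : 0 ≤ M) {S h : ℝ} (hpos : 0 < h) (hSh : S * h ≤ 1)
    (c : ℝ) (hc : |c| ≤ S) :
    |f (xc + c * h) - (f xc + iteratedDeriv 2 f xc * (c * h) ^ 2 / 2
        + iteratedDeriv 3 f xc * (c * h) ^ 3 / 6 + iteratedDeriv 4 f xc * (c * h) ^ 4 / 24)|
      ≤ M * S ^ 5 * h ^ 5 := by
  have habs : |c * h| = |c| * h := by rw [abs_mul, abs_of_pos hpos]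
  have hch : |c * h| ≤ S * h := by
    rw [habs]; exact mul_le_mul_of_nonneg_right hc hpos.le
  have ht1 : |c * h| ≤ 1 := hch.trans hSh
  have := hT (c * h) ht1
  rw [hg1, zero_mul, add_zero] at this
  refine this.trans ?_
  calc M * |c * h| ^ 5 ≤ M * (S * h) ^ 5 :=
        mul_le_mul_of_nonneg_left (pow_le_pow_left₀ (abs_nonneg _) hch 5) hM
    _ = M * S ^ 5 * h ^ 5 := by ring

private lemma assemble1 {A B P2 P3 P4 Q3 Q4 h KA KB : ℝ}
    (hpos : 0 < h) (hh1 : h ≤ 1) (hKA : 0 ≤ KA) (hKB : 0 ≤ KB)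
    (hA : |A - (P2 * h ^ 2 + P3 * h ^ 3 + P4 * h ^ 4)| ≤ KA * h ^ 5)
    (hB : |B - (Q3 * h ^ 3 + Q4 * h ^ 4)| ≤ KB * h ^ 5) :
    |1 / 4 * A * B - 1 / 4 * (P2 * Q3) * h ^ 5|
      ≤ 1 / 4 * ((|P2| + |P3| + |P4| + KA) * (|Q4| + KB)
          + |Q3| * (|P3| + |P4| + KA)) * h ^ 6 := by
  have hp : ∀ m n : ℕ, n ≤ m → h ^ m ≤ h ^ n := fun m n hmn =>
    pow_le_pow_of_le_one hpos.le hh1 hmn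
  have hBq : |B - Q3 * h ^ 3| ≤ (|Q4| + KB) * h ^ 4 := by
    have e : B - Q3 * h ^ 3 = (B - (Q3 * h ^ 3 + Q4 * h ^ 4)) + Q4 * h ^ 4 := by ring
    rw [e]
    calc |(B - (Q3 * h ^ 3 + Q4 * h ^ 4)) + Q4 * h ^ 4|
        ≤ |B - (Q3 * h ^ 3 + Q4 * h ^ 4)| + |Q4 * h ^ 4| := abs_add_le _ _
      _ ≤ KB * h ^ 5 + |Q4| * h ^ 4 := by
          rw [abs_mul, abs_pow, abs_of_pos hpos]; linarith
      _ ≤ (|Q4| + KB) * h ^ 4 := by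
          have := mul_le_mul_of_nonneg_left (hp 5 4 (by norm_num)) hKB
          linarith
  have hAq : |A - P2 * h ^ 2| ≤ (|P3| + |P4| + KA) * h ^ 3 := by
    have e : A - P2 * h ^ 2
        = (A - (P2 * h ^ 2 + P3 * h ^ 3 + P4 * h ^ 4)) + P3 * h ^ 3 + P4 * h ^ 4 := by ring
    rw [e]
    calc |(A - (P2 * h ^ 2 + P3 * h ^ 3 + P4 * h ^ 4)) + P3 * h ^ 3 + P4 * h ^ 4|
        ≤ |(A - (P2 * h ^ 2 + P3 * h ^ 3 + P4 * h ^ 4)) + P3 * h ^ 3| + |P4 * h ^ 4| :=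
          abs_add_le _ _
      _ ≤ |A - (P2 * h ^ 2 + P3 * h ^ 3 + P4 * h ^ 4)| + |P3 * h ^ 3| + |P4 * h ^ 4| := by
          linarith [abs_add_le (A - (P2 * h ^ 2 + P3 * h ^ 3 + P4 * h ^ 4)) (P3 * h ^ 3)]
      _ ≤ KA * h ^ 5 + |P3| * h ^ 3 + |P4| * h ^ 4 := by
          rw [abs_mul, abs_pow, abs_of_pos hpos, abs_mul, abs_pow, abs_of_pos hpos]; linarith
      _ ≤ (|P3| + |P4| + KA) * h ^ 3 := by
          have u1 := mul_le_mul_of_nonneg_left (hp 5 3 (by norm_num)) hKA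
          have u2 := mul_le_mul_of_nonneg_left (hp 4 3 (by norm_num)) (abs_nonneg P4)
          linarith
  have hAb : |A| ≤ (|P2| + |P3| + |P4| + KA) * h ^ 2 := by
    have e : A = (A - P2 * h ^ 2) + P2 * h ^ 2 := by ring
    rw [e]
    calc |(A - P2 * h ^ 2) + P2 * h ^ 2| ≤ |A - P2 * h ^ 2| + |P2 * h ^ 2| := abs_add_le _ _
      _ ≤ (|P3| + |P4| + KA) * h ^ 3 + |P2| * h ^ 2 := by
          rw [abs_mul, abs_pow, abs_of_pos hpos]; linarith
      _ ≤ (|P2| + |P3| + |P4| + KA) * h ^ 2 := by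
          have u1 := mul_le_mul_of_nonneg_left (hp 3 2 (by norm_num))
            (by positivity : (0:ℝ) ≤ |P3| + |P4| + KA)
          linarith
  have key : 1 / 4 * A * B - 1 / 4 * (P2 * Q3) * h ^ 5
      = 1 / 4 * (A * (B - Q3 * h ^ 3) + Q3 * h ^ 3 * (A - P2 * h ^ 2)) := by ring
  rw [key]
  have t1 : |A * (B - Q3 * h ^ 3)|
      ≤ ((|P2| + |P3| + |P4| + KA) * h ^ 2) * ((|Q4| + KB) * h ^ 4) := by
    rw [abs_mul]
    exact mul_le_mul hAb hBq (abs_nonneg _) (by positivity)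
  have t2 : |Q3 * h ^ 3 * (A - P2 * h ^ 2)|
      ≤ (|Q3| * h ^ 3) * ((|P3| + |P4| + KA) * h ^ 3) := by
    rw [abs_mul, abs_mul, abs_pow, abs_of_pos hpos]
    exact mul_le_mul le_rfl hAq (abs_nonneg _) (by positivity)
  calc |1 / 4 * (A * (B - Q3 * h ^ 3) + Q3 * h ^ 3 * (A - P2 * h ^ 2))|
      ≤ 1 / 4 * (|A * (B - Q3 * h ^ 3)| + |Q3 * h ^ 3 * (A - P2 * h ^ 2)|) := by
        rw [abs_mul]
        have := abs_add_le (A * (B - Q3 * h ^ 3)) (Q3 * h ^ 3 * (A - P2 * h ^ 2))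
        have h14 : |(1:ℝ) / 4| = 1 / 4 := by norm_num
        rw [h14]
        nlinarith [abs_nonneg (A * (B - Q3 * h ^ 3) + Q3 * h ^ 3 * (A - P2 * h ^ 2))]
    _ ≤ 1 / 4 * (((|P2| + |P3| + |P4| + KA) * h ^ 2) * ((|Q4| + KB) * h ^ 4)
          + (|Q3| * h ^ 3) * ((|P3| + |P4| + KA) * h ^ 3)) := by linarith
    _ = 1 / 4 * ((|P2| + |P3| + |P4| + KA) * (|Q4| + KB)
          + |Q3| * (|P3| + |P4| + KA)) * h ^ 6 := by ring

private lemma assemble2 {A B P4 Q3 Q4 h KA KB : ℝ}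
    (hpos : 0 < h) (hh1 : h ≤ 1) (hKA : 0 ≤ KA) (hKB : 0 ≤ KB)
    (hA : |A - P4 * h ^ 4| ≤ KA * h ^ 5)
    (hB : |B - (Q3 * h ^ 3 + Q4 * h ^ 4)| ≤ KB * h ^ 5) :
    |1 / 4 * A * B - 1 / 4 * (P4 * Q3) * h ^ 7|
      ≤ 1 / 4 * ((|P4| + KA) * (|Q4| + KB) + |Q3| * KA) * h ^ 8 := by
  have hp : ∀ m n : ℕ, n ≤ m → h ^ m ≤ h ^ n := fun m n hmn =>
    pow_le_pow_of_le_one hpos.le hh1 hmn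
  have hBq : |B - Q3 * h ^ 3| ≤ (|Q4| + KB) * h ^ 4 := by
    have e : B - Q3 * h ^ 3 = (B - (Q3 * h ^ 3 + Q4 * h ^ 4)) + Q4 * h ^ 4 := by ring
    rw [e]
    calc |(B - (Q3 * h ^ 3 + Q4 * h ^ 4)) + Q4 * h ^ 4|
        ≤ |B - (Q3 * h ^ 3 + Q4 * h ^ 4)| + |Q4 * h ^ 4| := abs_add_le _ _
      _ ≤ KB * h ^ 5 + |Q4| * h ^ 4 := by
          rw [abs_mul, abs_pow, abs_of_pos hpos]; linarith
      _ ≤ (|Q4| + KB) * h ^ 4 := by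
          have := mul_le_mul_of_nonneg_left (hp 5 4 (by norm_num)) hKB
          linarith
  have hAb : |A| ≤ (|P4| + KA) * h ^ 4 := by
    have e : A = (A - P4 * h ^ 4) + P4 * h ^ 4 := by ring
    rw [e]
    calc |(A - P4 * h ^ 4) + P4 * h ^ 4| ≤ |A - P4 * h ^ 4| + |P4 * h ^ 4| := abs_add_le _ _
      _ ≤ KA * h ^ 5 + |P4| * h ^ 4 := by
          rw [abs_mul, abs_pow, abs_of_pos hpos]; linarith
      _ ≤ (|P4| + KA) * h ^ 4 := by
          have := mul_le_mul_of_nonneg_left (hp 5 4 (by norm_num)) hKA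
          linarith
  have key : 1 / 4 * A * B - 1 / 4 * (P4 * Q3) * h ^ 7
      = 1 / 4 * (A * (B - Q3 * h ^ 3) + Q3 * h ^ 3 * (A - P4 * h ^ 4)) := by ring
  rw [key]
  have t1 : |A * (B - Q3 * h ^ 3)| ≤ ((|P4| + KA) * h ^ 4) * ((|Q4| + KB) * h ^ 4) := by
    rw [abs_mul]
    exact mul_le_mul hAb hBq (abs_nonneg _) (by positivity)
  have t2 : |Q3 * h ^ 3 * (A - P4 * h ^ 4)| ≤ (|Q3| * h ^ 3) * (KA * h ^ 5) := by
    rw [abs_mul, abs_mul, abs_pow, abs_of_pos hpos]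
    exact mul_le_mul le_rfl hA (abs_nonneg _) (by positivity)
  calc |1 / 4 * (A * (B - Q3 * h ^ 3) + Q3 * h ^ 3 * (A - P4 * h ^ 4))|
      ≤ 1 / 4 * (|A * (B - Q3 * h ^ 3)| + |Q3 * h ^ 3 * (A - P4 * h ^ 4)|) := by
        rw [abs_mul]
        have := abs_add_le (A * (B - Q3 * h ^ 3)) (Q3 * h ^ 3 * (A - P4 * h ^ 4))
        have h14 : |(1:ℝ) / 4| = 1 / 4 := by norm_num
        rw [h14]
        nlinarith [abs_nonneg (A * (B - Q3 * h ^ 3) + Q3 * h ^ 3 * (A - P4 * h ^ 4))]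
    _ ≤ 1 / 4 * (((|P4| + KA) * h ^ 4) * ((|Q4| + KB) * h ^ 4)
          + (|Q3| * h ^ 3) * (KA * h ^ 5)) := by linarith
    _ = 1 / 4 * ((|P4| + KA) * (|Q4| + KB) + |Q3| * KA) * h ^ 8 := by ring

private lemma lip34 {f : ℝ → ℝ} (hf : ContDiff ℝ (⊤ : ℕ∞) f) (xc : ℝ) :
    ∃ L ≥ 0, ∀ y ∈ Icc (xc - 1) (xc + 1),
      |iteratedDeriv 3 f y * iteratedDeriv 4 f y
        - iteratedDeriv 3 f xc * iteratedDeriv 4 f xc| ≤ L * |y - xc| := by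
  obtain ⟨L0, hL0⟩ := (isCompact_Icc (a := xc - 1) (b := xc + 1)).exists_bound_of_continuousOn
    (Continuous.continuousOn
      (((hf.continuous_iteratedDeriv 4 (by exact WithTop.coe_le_coe.2 le_top)).mul (hf.continuous_iteratedDeriv 4 (by exact WithTop.coe_le_coe.2 le_top))).add
        ((hf.continuous_iteratedDeriv 3 (by exact WithTop.coe_le_coe.2 le_top)).mul (hf.continuous_iteratedDeriv 5 (by exact WithTop.coe_le_coe.2 le_top)))))
  refine ⟨|L0|, abs_nonneg _, fun y hy => ?_⟩
  have key := Convex.norm_image_sub_le_of_norm_hasDerivWithin_le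
    (f := fun x => iteratedDeriv 3 f x * iteratedDeriv 4 f x)
    (f' := fun x => iteratedDeriv 4 f x * iteratedDeriv 4 f x
      + iteratedDeriv 3 f x * iteratedDeriv 5 f x)
    (s := Icc (xc - 1) (xc + 1)) (C := |L0|) (x := xc) (y := y)
    (fun x _ => (((hasDerivAt_iteratedDeriv hf 3 x).mul
      (hasDerivAt_iteratedDeriv hf 4 x))).hasDerivWithinAt)
    (fun x hx => (hL0 x hx).trans (le_abs_self L0))
    (convex_Icc _ _) (by constructor <;> linarith) hy
  simpa [Real.norm_eq_abs] using key

set_option maxHeartbeats 1000000 in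
/-- Taylor expansion of τ_{CP₁} about a first-order critical point
x_c = x_j + λΔx: O(Δx⁵) with coefficient (−6λ−3)f''f''' for λ ≠ −1/2, and
−(1/4)f'''(x_j)f⁽⁴⁾(x_j)Δx⁷ + O(Δx⁸) for λ = −1/2 (where x_j = x_c + Δx/2). -/
theorem stmt13 (f : ℝ → ℝ) (hf : ContDiff ℝ (⊤ : ℕ∞) f) (xc lam : ℝ)
    (h1 : deriv f xc = 0) (h2 : iteratedDeriv 2 f xc ≠ 0)
    (h3 : iteratedDeriv 3 f xc ≠ 0) :
    (lam ≠ -(1 / 2) →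
      ∃ C > 0, ∃ δ > 0, ∀ h : ℝ, 0 < h → h < δ →
        |(1 / 4) * (-(f (xc - lam * h + 2 * h)) + 3 * f (xc - lam * h + h)
              + 21 * f (xc - lam * h) - 23 * f (xc - lam * h - h))
            * (f (xc - lam * h + 2 * h) - 3 * f (xc - lam * h + h)
              + 3 * f (xc - lam * h) - f (xc - lam * h - h))
          - (-6 * lam - 3) * (iteratedDeriv 2 f xc) * (iteratedDeriv 3 f xc) * h ^ 5|
          ≤ C * h ^ 6) ∧
    (lam = -(1 / 2) →
      ∃ C > 0, ∃ δ > 0, ∀ h : ℝ, 0 < h → h < δ →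
        |(1 / 4) * (-(f (xc + h / 2 + 2 * h)) + 3 * f (xc + h / 2 + h)
              + 21 * f (xc + h / 2) - 23 * f (xc + h / 2 - h))
            * (f (xc + h / 2 + 2 * h) - 3 * f (xc + h / 2 + h)
              + 3 * f (xc + h / 2) - f (xc + h / 2 - h))
          - (-(1 / 4)) * (iteratedDeriv 3 f (xc + h / 2))
              * (iteratedDeriv 4 f (xc + h / 2)) * h ^ 7|
          ≤ C * h ^ 8) := by
  have hg1 : iteratedDeriv 1 f xc = 0 := by rw [iteratedDeriv_one]; exact h1
  obtain ⟨M, hMpos, hT⟩ := taylor4 hf xc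
  constructor
  · -- Part (i)
    intro _hlam
    set g2 := iteratedDeriv 2 f xc with hg2def
    set g3 := iteratedDeriv 3 f xc with hg3def
    set g4 := iteratedDeriv 4 f xc with hg4def
    set K := M * (|lam| + 2) ^ 5 with hK
    have hKpos : 0 < K := hK ▸ mul_pos hMpos (by positivity)
    refine ⟨1 / 4 * ((|(-12 - 24 * lam) * g2| + |(3 + 12 * lam + 12 * lam ^ 2) * g3|
        + |(-3 / 2 - 3 * lam - 6 * lam ^ 2 - 4 * lam ^ 3) * g4| + 48 * K)
        * (|(1 / 2 - lam) * g4| + 8 * K)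
        + |g3| * (|(3 + 12 * lam + 12 * lam ^ 2) * g3|
        + |(-3 / 2 - 3 * lam - 6 * lam ^ 2 - 4 * lam ^ 3) * g4| + 48 * K)), ?_,
        1 / (|lam| + 3), by positivity, ?_⟩
    · have a1 : (0:ℝ) ≤ |(-12 - 24 * lam) * g2| := abs_nonneg _
      have a2 : (0:ℝ) ≤ |(3 + 12 * lam + 12 * lam ^ 2) * g3| := abs_nonneg _
      have a3 : (0:ℝ) ≤ |(-3 / 2 - 3 * lam - 6 * lam ^ 2 - 4 * lam ^ 3) * g4| := abs_nonneg _
      have a4 : (0:ℝ) ≤ |(1 / 2 - lam) * g4| := abs_nonneg _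
      have a5 : (0:ℝ) ≤ |g3| := abs_nonneg _
      nlinarith [mul_pos
        (show (0:ℝ) < |(-12 - 24 * lam) * g2| + |(3 + 12 * lam + 12 * lam ^ 2) * g3|
          + |(-3 / 2 - 3 * lam - 6 * lam ^ 2 - 4 * lam ^ 3) * g4| + 48 * K by linarith)
        (show (0:ℝ) < |(1 / 2 - lam) * g4| + 8 * K by linarith),
        mul_nonneg a5 (show (0:ℝ) ≤ |(3 + 12 * lam + 12 * lam ^ 2) * g3|
          + |(-3 / 2 - 3 * lam - 6 * lam ^ 2 - 4 * lam ^ 3) * g4| + 48 * K by linarith)]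
    · intro h hpos hlt
      have hlam3 : (0:ℝ) < |lam| + 3 := by positivity
      have hmul : h * (|lam| + 3) < 1 := (lt_div_iff₀ hlam3).1 hlt
      have hh1 : h ≤ 1 := by nlinarith [abs_nonneg lam]
      have hSh : (|lam| + 2) * h ≤ 1 := by nlinarith [abs_nonneg lam]
      rw [show xc - lam * h = xc + -lam * h from by ring,
          show xc + -lam * h + 2 * h = xc + (2 - lam) * h from by ring,
          show xc + -lam * h + h = xc + (1 - lam) * h from by ring,
          show xc + -lam * h - h = xc + (-1 - lam) * h from by ring]
      have hq := node_bound hg1 hT hMpos.le hpos hSh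
      have hc1 : |(2 : ℝ) - lam| ≤ |lam| + 2 := by
        calc |(2:ℝ) - lam| ≤ |(2:ℝ)| + |lam| := abs_sub 2 lam
          _ = |lam| + 2 := by rw [abs_two]; ring
      have hc2 : |(1 : ℝ) - lam| ≤ |lam| + 2 := by
        calc |(1:ℝ) - lam| ≤ |(1:ℝ)| + |lam| := abs_sub 1 lam
          _ ≤ |lam| + 2 := by rw [abs_one]; linarith
      have hc3 : |(-lam : ℝ)| ≤ |lam| + 2 := by rw [abs_neg]; linarith [abs_nonneg lam]
      have hc4 : |(-1 : ℝ) - lam| ≤ |lam| + 2 := by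
        calc |(-1:ℝ) - lam| ≤ |(-1:ℝ)| + |lam| := abs_sub (-1) lam
          _ ≤ |lam| + 2 := by rw [abs_neg, abs_one]; linarith
      have k1 := hq (2 - lam) hc1
      have k2 := hq (1 - lam) hc2
      have k3 := hq (-lam) hc3
      have k4 := hq (-1 - lam) hc4
      rw [← hK] at k1 k2 k3 k4
      set AA := -(f (xc + (2 - lam) * h)) + 3 * f (xc + (1 - lam) * h)
        + 21 * f (xc + -lam * h) - 23 * f (xc + (-1 - lam) * h) with hAA
      set BB := f (xc + (2 - lam) * h) - 3 * f (xc + (1 - lam) * h)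
        + 3 * f (xc + -lam * h) - f (xc + (-1 - lam) * h) with hBB
      have hA : |AA - ((-12 - 24 * lam) * g2 * h ^ 2 + (3 + 12 * lam + 12 * lam ^ 2) * g3 * h ^ 3
          + (-3 / 2 - 3 * lam - 6 * lam ^ 2 - 4 * lam ^ 3) * g4 * h ^ 4)| ≤ 48 * K * h ^ 5 := by
        have a1 := abs_le.1 k1; have a2 := abs_le.1 k2
        have a3 := abs_le.1 k3; have a4 := abs_le.1 k4
        rw [hAA, abs_le]
        constructor <;> linarith [a1.1, a1.2, a2.1, a2.2, a3.1, a3.2, a4.1, a4.2]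
      have hB : |BB - (g3 * h ^ 3 + (1 / 2 - lam) * g4 * h ^ 4)| ≤ 8 * K * h ^ 5 := by
        have a1 := abs_le.1 k1; have a2 := abs_le.1 k2
        have a3 := abs_le.1 k3; have a4 := abs_le.1 k4
        rw [hBB, abs_le]
        constructor <;> linarith [a1.1, a1.2, a2.1, a2.2, a3.1, a3.2, a4.1, a4.2]
      rw [show (-6 * lam - 3) * g2 * g3 * h ^ 5
          = 1 / 4 * ((-12 - 24 * lam) * g2 * g3) * h ^ 5 from by ring]
      exact assemble1 hpos hh1 (by linarith) (by linarith) hA hB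
  · -- Part (ii)
    intro _hlam
    set g2 := iteratedDeriv 2 f xc with hg2def
    set g3 := iteratedDeriv 3 f xc with hg3def
    set g4 := iteratedDeriv 4 f xc with hg4def
    set K := M * ((5:ℝ) / 2) ^ 5 with hK
    have hKpos : 0 < K := hK ▸ mul_pos hMpos (by positivity)
    obtain ⟨L, hL0, hLip⟩ := lip34 hf xc
    refine ⟨1 / 4 * ((|(-g4)| + 48 * K) * (|g4| + 8 * K) + |g3| * (48 * K)) + L / 8, ?_,
      1 / 4, by norm_num, ?_⟩
    · have a1 : (0:ℝ) ≤ |(-g4)| := abs_nonneg _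
      have a2 : (0:ℝ) ≤ |g4| := abs_nonneg _
      have a3 : (0:ℝ) ≤ |g3| := abs_nonneg _
      nlinarith [mul_pos (show (0:ℝ) < |(-g4)| + 48 * K by linarith)
        (show (0:ℝ) < |g4| + 8 * K by linarith),
        mul_nonneg a3 (show (0:ℝ) ≤ 48 * K by linarith)]
    · intro h hpos hlt
      have hh1 : h ≤ 1 := by linarith
      have hSh : (5:ℝ) / 2 * h ≤ 1 := by linarith
      rw [show xc + h / 2 + 2 * h = xc + 5 / 2 * h from by ring,
          show xc + h / 2 + h = xc + 3 / 2 * h from by ring,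
          show xc + h / 2 - h = xc + -(1 / 2) * h from by ring,
          show xc + h / 2 = xc + 1 / 2 * h from by ring]
      have hq := node_bound hg1 hT hMpos.le hpos hSh
      have k1 := hq (5 / 2) (by rw [abs_of_pos] <;> norm_num)
      have k2 := hq (3 / 2) (by rw [abs_of_pos] <;> norm_num)
      have k3 := hq (1 / 2) (by rw [abs_of_pos] <;> norm_num)
      have k4 := hq (-(1 / 2)) (by rw [abs_neg, abs_of_pos] <;> norm_num)
      rw [← hK] at k1 k2 k3 k4
      set AA := -(f (xc + 5 / 2 * h)) + 3 * f (xc + 3 / 2 * h)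
        + 21 * f (xc + 1 / 2 * h) - 23 * f (xc + -(1 / 2) * h) with hAA
      set BB := f (xc + 5 / 2 * h) - 3 * f (xc + 3 / 2 * h)
        + 3 * f (xc + 1 / 2 * h) - f (xc + -(1 / 2) * h) with hBB
      have hA : |AA - (-g4) * h ^ 4| ≤ 48 * K * h ^ 5 := by
        have a1 := abs_le.1 k1; have a2 := abs_le.1 k2
        have a3 := abs_le.1 k3; have a4 := abs_le.1 k4
        rw [hAA, abs_le]
        constructor <;> linarith [a1.1, a1.2, a2.1, a2.2, a3.1, a3.2, a4.1, a4.2]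
      have hB : |BB - (g3 * h ^ 3 + g4 * h ^ 4)| ≤ 8 * K * h ^ 5 := by
        have a1 := abs_le.1 k1; have a2 := abs_le.1 k2
        have a3 := abs_le.1 k3; have a4 := abs_le.1 k4
        rw [hBB, abs_le]
        constructor <;> linarith [a1.1, a1.2, a2.1, a2.2, a3.1, a3.2, a4.1, a4.2]
      have main := assemble2 hpos hh1 (by linarith) (by linarith) hA hB
      have hy : xc + 1 / 2 * h ∈ Icc (xc - 1) (xc + 1) := by
        constructor <;> linarith
      have hlipv := hLip _ hy
      rw [show xc + 1 / 2 * h - xc = 1 / 2 * h from by ring,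
        abs_of_pos (by linarith : (0:ℝ) < 1 / 2 * h)] at hlipv
      have split : 1 / 4 * AA * BB
          - (-(1 / 4)) * iteratedDeriv 3 f (xc + 1 / 2 * h)
            * iteratedDeriv 4 f (xc + 1 / 2 * h) * h ^ 7
          = (1 / 4 * AA * BB - 1 / 4 * ((-g4) * g3) * h ^ 7)
            + 1 / 4 * (iteratedDeriv 3 f (xc + 1 / 2 * h) * iteratedDeriv 4 f (xc + 1 / 2 * h)
              - g3 * g4) * h ^ 7 := by ring
      rw [split]
      have hz : |1 / 4 * (iteratedDeriv 3 f (xc + 1 / 2 * h) * iteratedDeriv 4 f (xc + 1 / 2 * h)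
          - g3 * g4) * h ^ 7|
          = 1 / 4 * |iteratedDeriv 3 f (xc + 1 / 2 * h) * iteratedDeriv 4 f (xc + 1 / 2 * h)
            - g3 * g4| * h ^ 7 := by
        rw [abs_mul, abs_mul, abs_pow, abs_of_pos hpos]
        norm_num
      calc |(1 / 4 * AA * BB - 1 / 4 * ((-g4) * g3) * h ^ 7)
            + 1 / 4 * (iteratedDeriv 3 f (xc + 1 / 2 * h) * iteratedDeriv 4 f (xc + 1 / 2 * h)
              - g3 * g4) * h ^ 7|
          ≤ |1 / 4 * AA * BB - 1 / 4 * ((-g4) * g3) * h ^ 7|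
            + |1 / 4 * (iteratedDeriv 3 f (xc + 1 / 2 * h) * iteratedDeriv 4 f (xc + 1 / 2 * h)
              - g3 * g4) * h ^ 7| := abs_add_le _ _
        _ ≤ 1 / 4 * ((|(-g4)| + 48 * K) * (|g4| + 8 * K) + |g3| * (48 * K)) * h ^ 8
            + 1 / 4 * (L * (1 / 2 * h)) * h ^ 7 := by
            refine add_le_add main ?_
            rw [hz]
            have hstep := mul_le_mul_of_nonneg_right
              (mul_le_mul_of_nonneg_left hlipv (by norm_num : (0:ℝ) ≤ 1 / 4))
              (pow_nonneg hpos.le 7)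
            exact hstep
        _ = (1 / 4 * ((|(-g4)| + 48 * K) * (|g4| + 8 * K) + |g3| * (48 * K)) + L / 8) * h ^ 8 := by
            ring
end

section
/- Let f be smooth with a first-order critical point at x_c = x_j + λΔx (f'(x_c) = 0, f''(x_c) ≠ 0), λ ∈ (-1,1). Then the WENO5-JS smoothness indicator β₂⁽³⁾ = (13/12)(f_{j-1} − 2f_j + f_{j+1})² + (1/4)(−f_{j-1} + f_{j+1})²... on the stencil {x_{j-1}, x_j, x_{j+1}} satisfies β₂⁽³⁾ = (13/12 + λ²) f''(x_c)² Δx⁴ + O(Δx⁵), and in particular its leading Δx⁴ coefficient (13/12 + λ²) f''(x_c)² is nonzero for every λ ∈ (-1,1). -/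
set_option maxHeartbeats 1000000

open scoped ContDiff



lemma vanish_bound : ∀ (n : ℕ) (g : ℝ → ℝ), ContDiff ℝ ∞ g →
    (∀ k ≤ n, iteratedDeriv k g 0 = 0) →
    ∃ C > 0, ∀ s : ℝ, |s| ≤ 1 → |g s| ≤ C * |s| ^ (n + 1) := by
  intro n
  induction n with
  | zero =>
    intro g hg hv
    obtain ⟨C, hC⟩ := (isCompact_Icc (a := (-1:ℝ)) (b := 1)).exists_bound_of_continuousOn
      ((hg.continuous_deriv (by norm_num)).continuousOn)
    refine ⟨max C 1, lt_of_lt_of_le one_pos (le_max_right _ _), fun s hs => ?_⟩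
    have h0 : g 0 = 0 := by simpa using hv 0 le_rfl
    have := Convex.norm_image_sub_le_of_norm_deriv_le (s := Set.Icc (-1:ℝ) 1)
      (fun x _ => (hg.differentiable (by norm_num)).differentiableAt)
      (fun x hx => le_trans (hC x hx) (le_max_left C (1:ℝ))) (convex_Icc _ _)
      (show (0:ℝ) ∈ Set.Icc (-1:ℝ) 1 by norm_num) (show s ∈ Set.Icc (-1:ℝ) 1 from Set.mem_Icc.mpr (abs_le.mp hs))
    simpa [h0] using this
  | succ n IH =>
    intro g hg hv
    obtain ⟨C, hCpos, hC⟩ := IH (deriv g) (contDiff_infty_iff_deriv.mp hg).2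
      (fun k hk => by
        rw [← iteratedDeriv_succ']
        exact hv (k + 1) (Nat.succ_le_succ hk))
    refine ⟨C, hCpos, fun s hs => ?_⟩
    have h0 : g 0 = 0 := by simpa using hv 0 (Nat.zero_le _)
    have key := Convex.norm_image_sub_le_of_norm_deriv_le (s := Set.uIcc (0:ℝ) s)
      (fun x _ => (hg.differentiable (by norm_num)).differentiableAt)
      (fun x hx => by
        have hx1 : |x| ≤ |s| := by
          rcases Set.mem_uIcc.mp hx with ⟨h1, h2⟩ | ⟨h1, h2⟩ <;> rw [abs_le] <;>
            constructor <;> simp only [abs_le] at * <;>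
            nlinarith [neg_abs_le s, le_abs_self s]
        calc ‖deriv g x‖ ≤ C * |x| ^ (n + 1) := hC x (le_trans hx1 hs)
          _ ≤ C * |s| ^ (n + 1) := by gcongr)
      (convex_uIcc _ _) Set.left_mem_uIcc Set.right_mem_uIcc
    have : ‖g s - g 0‖ ≤ C * |s| ^ (n + 1) * ‖s - (0:ℝ)‖ := key
    rw [h0, sub_zero, sub_zero] at this
    calc |g s| ≤ C * |s| ^ (n + 1) * |s| := this
      _ = C * |s| ^ (n + 1 + 1) := by rw [pow_succ, pow_succ]; ring

lemma taylor4_bound (f : ℝ → ℝ) (hf : ContDiff ℝ ∞ f) (xc : ℝ) (h1 : deriv f xc = 0) :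
    ∃ C > 0, ∀ s : ℝ, |s| ≤ 1 →
      |f (xc + s) - (f xc + iteratedDeriv 2 f xc / 2 * s ^ 2 + iteratedDeriv 3 f xc / 6 * s ^ 3
        + iteratedDeriv 4 f xc / 24 * s ^ 4)| ≤ C * |s| ^ 5 := by
  set c2 := iteratedDeriv 2 f xc
  set c3 := iteratedDeriv 3 f xc
  set c4 := iteratedDeriv 4 f xc
  have hd : ∀ (k : ℕ) (t : ℝ),
      HasDerivAt (fun s => iteratedDeriv k f (xc + s)) (iteratedDeriv (k+1) f (xc + t)) t := by
    intro k t
    have hk : (k : WithTop ℕ∞) < ∞ := by exact_mod_cast lt_top_iff_ne_top.mpr (ENat.coe_ne_top k)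
    have hdd := ((hf.differentiable_iteratedDeriv k hk) (xc + t)).hasDerivAt
    have := hdd.comp t ((hasDerivAt_id t).const_add xc)
    simpa [Function.comp_def, iteratedDeriv_succ] using this
  set g : ℝ → ℝ := fun s => f (xc + s) - (f xc + c2/2*s^2 + c3/6*s^3 + c4/24*s^4) with hg
  set g1 : ℝ → ℝ := fun t => iteratedDeriv 1 f (xc + t) - (c2*t + c3/2*t^2 + c4/6*t^3) with hg1
  set g2 : ℝ → ℝ := fun t => iteratedDeriv 2 f (xc + t) - (c2 + c3*t + c4/2*t^2) with hg2
  set g3 : ℝ → ℝ := fun t => iteratedDeriv 3 f (xc + t) - (c3 + c4*t) with hg3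
  set g4 : ℝ → ℝ := fun t => iteratedDeriv 4 f (xc + t) - c4 with hg4
  have hP : ∀ t : ℝ, HasDerivAt (fun s : ℝ => f xc + c2/2*s^2 + c3/6*s^3 + c4/24*s^4)
      (c2*t + c3/2*t^2 + c4/6*t^3) t := by
    intro t
    have := (((hasDerivAt_pow 2 t).const_mul (c2/2)).const_add (f xc)).add
      ((hasDerivAt_pow 3 t).const_mul (c3/6)) |>.add ((hasDerivAt_pow 4 t).const_mul (c4/24))
    refine this.congr_deriv ?_
    push_cast; ring
  have hP1 : ∀ t : ℝ, HasDerivAt (fun s : ℝ => c2*s + c3/2*s^2 + c4/6*s^3)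
      (c2 + c3*t + c4/2*t^2) t := by
    intro t
    have := (((hasDerivAt_id t).const_mul c2).add
      ((hasDerivAt_pow 2 t).const_mul (c3/2))).add ((hasDerivAt_pow 3 t).const_mul (c4/6))
    refine this.congr_deriv ?_
    push_cast; ring
  have hP2 : ∀ t : ℝ, HasDerivAt (fun s : ℝ => c2 + c3*s + c4/2*s^2) (c3 + c4*t) t := by
    intro t
    have := (((hasDerivAt_id t).const_mul c3).const_add c2).add
      ((hasDerivAt_pow 2 t).const_mul (c4/2))
    refine this.congr_deriv ?_
    push_cast; ring
  have hP3 : ∀ t : ℝ, HasDerivAt (fun s : ℝ => c3 + c4*s) (c4) t := by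
    intro t
    have := ((hasDerivAt_id t).const_mul c4).const_add c3
    simpa using this
  have hgd : deriv g = g1 := by
    funext t
    have h0 : HasDerivAt (fun s => f (xc + s)) (iteratedDeriv 1 f (xc + t)) t := by
      simpa using hd 0 t
    exact (h0.sub (hP t)).deriv
  have hgd1 : deriv g1 = g2 := by
    funext t
    exact ((hd 1 t).sub (hP1 t)).deriv
  have hgd2 : deriv g2 = g3 := by
    funext t
    exact ((hd 2 t).sub (hP2 t)).deriv
  have hgd3 : deriv g3 = g4 := by
    funext t
    exact ((hd 3 t).sub (hP3 t)).deriv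
  have hgC : ContDiff ℝ ∞ g := by
    apply ContDiff.sub
    · exact hf.comp (contDiff_const.add contDiff_id)
    · fun_prop
  have hv : ∀ k ≤ 4, iteratedDeriv k g 0 = 0 := by
    intro k hk
    interval_cases k
    · simp [hg]
    · rw [iteratedDeriv_one, hgd, hg1]
      simp [iteratedDeriv_one, h1]
    · rw [show (2:ℕ) = 0 + 1 + 1 by rfl, iteratedDeriv_succ', iteratedDeriv_succ', hgd, hgd1]
      simp [hg2, c2]
    · rw [show (3:ℕ) = 0 + 1 + 1 + 1 by rfl, iteratedDeriv_succ', iteratedDeriv_succ',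
        iteratedDeriv_succ', hgd, hgd1, hgd2]
      simp [hg3, c3]
    · rw [show (4:ℕ) = 0 + 1 + 1 + 1 + 1 by rfl, iteratedDeriv_succ', iteratedDeriv_succ',
        iteratedDeriv_succ', iteratedDeriv_succ', hgd, hgd1, hgd2, hgd3]
      simp [hg4, c4]
  obtain ⟨C, hC, hb⟩ := vanish_bound 4 g hgC hv
  exact ⟨C, hC, fun s hs => hb s hs⟩


lemma abs_term (q c h : ℝ) (b : ℝ) (k : ℕ) (hq : |q| ≤ b) (h0 : 0 < h) (h1 : h ≤ 1)
    (hk : 2 ≤ k) : |q * c * h ^ k| ≤ b * |c| * h ^ 2 := by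
  rw [abs_mul, abs_mul, abs_pow, abs_of_pos h0]
  have hpk : h ^ k ≤ h ^ 2 := pow_le_pow_of_le_one h0.le h1 hk
  have h1' : |q| * |c| ≤ b * |c| := mul_le_mul_of_nonneg_right hq (abs_nonneg c)
  have h2' : |q| * |c| * h ^ k ≤ |q| * |c| * h ^ 2 :=
    mul_le_mul_of_nonneg_left hpk (mul_nonneg (abs_nonneg q) (abs_nonneg c))
  have h3' : |q| * |c| * h ^ 2 ≤ b * |c| * h ^ 2 :=
    mul_le_mul_of_nonneg_right h1' (pow_pos h0 2).le
  linarith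

lemma prod_pow_le (a b h : ℝ) (ha : 0 ≤ a) (hb : 0 ≤ b) (h0 : 0 < h) (h1 : h ≤ 1) :
    (a * h ^ 5) * (b * h ^ 2) ≤ a * b * h ^ 5 := by
  have h21 : h ^ 2 ≤ 1 := pow_le_one₀ h0.le h1
  have : (a * h ^ 5) * (b * h ^ 2) = (a * b * h ^ 5) * h ^ 2 := by ring
  rw [this]
  nlinarith [mul_nonneg (mul_nonneg ha hb) (pow_pos h0 5).le]

lemma bigC_pos (M K C1 : ℝ) (hM : 0 < M) (hK : 0 ≤ K) (hC1 : 0 ≤ C1) :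
    0 < 13/12*(128*M*(128*M+2*K)) + 1/4*(64*M*(64*M+4*K)) + C1 + 1 := by
  nlinarith [mul_nonneg hM.le hK, mul_nonneg hM.le hM.le]

/-- The three-point Jiang–Shu smoothness indicator
β₂⁽³⁾ = (13/12)(f_{j-1}−2f_j+f_{j+1})² + (1/4)(f_{j+1}−f_{j-1})² has leading term
(13/12+λ²) f''(x_c)² Δx⁴ at a first-order critical point x_c = x_j + λΔx, with
nonvanishing leading coefficient for every λ ∈ (-1,1). -/
theorem stmt15 (f : ℝ → ℝ) (hf : ContDiff ℝ (⊤ : ℕ∞) f) (xc lam : ℝ)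
    (hlam : lam ∈ Set.Ioo (-1 : ℝ) 1)
    (h1 : deriv f xc = 0) (h2 : iteratedDeriv 2 f xc ≠ 0) :
    (∃ C > 0, ∃ δ > 0, ∀ h : ℝ, 0 < h → h < δ →
      |(13 / 12) * (f (xc - lam * h - h) - 2 * f (xc - lam * h) + f (xc - lam * h + h)) ^ 2
        + (1 / 4) * (f (xc - lam * h + h) - f (xc - lam * h - h)) ^ 2
        - (13 / 12 + lam ^ 2) * (iteratedDeriv 2 f xc) ^ 2 * h ^ 4| ≤ C * h ^ 5) ∧
    (13 / 12 + lam ^ 2) * (iteratedDeriv 2 f xc) ^ 2 ≠ 0 := by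
  obtain ⟨hl1, hl2⟩ := hlam
  have hla : |lam| ≤ 1 := by rw [abs_le]; constructor <;> linarith
  have hlam2 : lam ^ 2 ≤ 1 := by nlinarith
  constructor
  · have hf' : ContDiff ℝ ∞ f := hf.of_le (by simp)
    set c2 := iteratedDeriv 2 f xc with hc2
    set c3 := iteratedDeriv 3 f xc with hc3
    set c4 := iteratedDeriv 4 f xc with hc4
    obtain ⟨M, hM, hTay⟩ := taylor4_bound f hf' xc h1
    set K := |c2| + |c3| + |c4| with hKdef
    have hK0 : (0:ℝ) ≤ K := by positivity
    set w0 := -(5/2)*lam*c2*c3 - lam^3*c2*c3 with hw0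
    set w1 := (17/12)*lam^2*c2*c4 + (13/72)*c2*c4 + (5/4)*lam^2*c3^2 + (1/3)*lam^4*c2*c4
      + (1/36)*c3^2 + (1/4)*lam^4*c3^2 with hw1
    set w2 := -(47/36)*lam^3*c3*c4 - (17/72)*lam*c3*c4 - (1/6)*lam^5*c3*c4 with hw2
    set w3 := (47/144)*lam^4*c4^2 + (17/144)*lam^2*c4^2 + (13/1728)*c4^2 + (1/36)*lam^6*c4^2
      with hw3
    set C1 := |w0| + |w1| + |w2| + |w3| with hC1def
    have hC10 : (0:ℝ) ≤ C1 := by rw [hC1def]; positivity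
    clear_value w0 w1 w2 w3 C1 K
    refine ⟨13/12*(128*M*(128*M+2*K)) + 1/4*(64*M*(64*M+4*K)) + C1 + 1,
      bigC_pos M K C1 hM hK0 hC10, 1/2, by norm_num, fun h hh0 hhd => ?_⟩
    have hh1 : h ≤ 1 := by linarith
    have hh52 : h ^ 5 ≤ h ^ 2 := pow_le_pow_of_le_one hh0.le hh1 (by norm_num)
    have key : ∀ t : ℝ, |t| ≤ 2 →
        |f (xc + t*h) - (f xc + c2/2*(t*h)^2 + c3/6*(t*h)^3 + c4/24*(t*h)^4)| ≤ 32*M*h^5 := by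
      intro t ht
      have hth : |t*h| ≤ 2*h := by
        rw [abs_mul, abs_of_pos hh0]
        exact mul_le_mul_of_nonneg_right ht hh0.le
      have h2h : |t*h| ≤ 1 := by linarith
      calc |f (xc + t*h) - (f xc + c2/2*(t*h)^2 + c3/6*(t*h)^3 + c4/24*(t*h)^4)|
          ≤ M * |t*h|^5 := hTay (t*h) h2h
        _ ≤ M * (2*h)^5 := by gcongr
        _ = 32*M*h^5 := by ring
    have e1 : xc - lam*h - h = xc + (-lam-1)*h := by ring
    have e3 : xc - lam*h + h = xc + (1-lam)*h := by ring
    have e2 : xc - lam*h = xc + (-lam)*h := by ring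
    rw [e1, e3, e2]
    set A := f (xc + (-lam-1)*h) with hA
    set B := f (xc + (-lam)*h) with hB
    set Cc := f (xc + (1-lam)*h) with hCc
    set QD := c2*h^2 - lam*c3*h^3 + (6*lam^2+1)/12*c4*h^4 with hQDdef
    set QE := -2*lam*c2*h^2 + (1+3*lam^2)/3*c3*h^3 - lam*(lam^2+1)/3*c4*h^4 with hQEdef
    set EA := A - (f xc + c2/2*((-lam-1)*h)^2 + c3/6*((-lam-1)*h)^3 + c4/24*((-lam-1)*h)^4)
      with hEA
    set EB := B - (f xc + c2/2*((-lam)*h)^2 + c3/6*((-lam)*h)^3 + c4/24*((-lam)*h)^4) with hEB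
    set EC := Cc - (f xc + c2/2*((1-lam)*h)^2 + c3/6*((1-lam)*h)^3 + c4/24*((1-lam)*h)^4)
      with hEC
    have hEAb : |EA| ≤ 32*M*h^5 := key (-lam-1) (by rw [abs_le]; constructor <;> linarith)
    have hEBb : |EB| ≤ 32*M*h^5 := key (-lam) (by rw [abs_le]; constructor <;> linarith)
    have hECb : |EC| ≤ 32*M*h^5 := key (1-lam) (by rw [abs_le]; constructor <;> linarith)
    have hD : A - 2*B + Cc - QD = EA - 2*EB + EC := by
      rw [hEA, hEB, hEC, hQDdef]; ring
    have hE : Cc - A - QE = EC - EA := by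
      rw [hEC, hEA, hQEdef]; ring
    clear_value A B Cc QD QE EA EB EC
    have hDb : |A - 2*B + Cc - QD| ≤ 128*M*h^5 := by
      rw [hD]
      have t0 : EA - 2*EB + EC = EA + -(2*EB) + EC := by ring
      rw [t0]
      have t1 := abs_add_three EA (-(2*EB)) EC
      have t2 : |(-(2*EB))| = 2 * |EB| := by rw [abs_neg, abs_mul]; simp
      rw [t2] at t1
      linarith only [t1, hEAb, hEBb, hECb]
    have hEb : |Cc - A - QE| ≤ 64*M*h^5 := by
      rw [hE, sub_eq_add_neg]
      have t1 := abs_add_le EC (-EA)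
      rw [abs_neg] at t1
      linarith only [t1, hEAb, hECb]
    have hQDb : |QD| ≤ K*h^2 := by
      have t0 : QD = 1*c2*h^2 + (-lam)*c3*h^3 + ((6*lam^2+1)/12)*c4*h^4 := by
        rw [hQDdef]; ring
      have t1 := abs_add_three (1*c2*h^2) ((-lam)*c3*h^3) (((6*lam^2+1)/12)*c4*h^4)
      rw [← t0] at t1
      have b1 := abs_term 1 c2 h 1 2 (by norm_num) hh0 hh1 le_rfl
      have b2 := abs_term (-lam) c3 h 1 3 (by rwa [abs_neg]) hh0 hh1 (by norm_num)
      have b3 := abs_term ((6*lam^2+1)/12) c4 h 1 4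
        (by rw [abs_of_pos (by positivity)]; linarith only [hlam2]) hh0 hh1 (by norm_num)
      rw [hKdef]
      linarith only [t1, b1, b2, b3]
    have hQEb : |QE| ≤ 2*K*h^2 := by
      have t0 : QE = (-(2*lam))*c2*h^2 + ((1+3*lam^2)/3)*c3*h^3 + (-(lam*(lam^2+1)/3))*c4*h^4 := by
        rw [hQEdef]; ring
      have t1 := abs_add_three ((-(2*lam))*c2*h^2) (((1+3*lam^2)/3)*c3*h^3)
        ((-(lam*(lam^2+1)/3))*c4*h^4)
      rw [← t0] at t1
      have b1 := abs_term (-(2*lam)) c2 h 2 2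
        (by rw [abs_neg, abs_mul]; rw [show |(2:ℝ)| = 2 by norm_num]; linarith only [hla]) hh0 hh1 le_rfl
      have b2 := abs_term ((1+3*lam^2)/3) c3 h 2 3
        (by rw [abs_of_pos (by positivity)]; linarith only [hlam2]) hh0 hh1 (by norm_num)
      have hq3 : |(-(lam*(lam^2+1)/3))| ≤ 2 := by
        rw [abs_neg, abs_div, abs_mul, abs_of_pos (show (0:ℝ) < lam^2+1 by positivity),
          show |(3:ℝ)| = 3 by norm_num]
        have hm : |lam| * (lam^2+1) ≤ 1 * (1+1) :=
          mul_le_mul hla (by linarith only [hlam2]) (by positivity) zero_le_one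
        linarith only [hm]
      have b3 := abs_term (-(lam*(lam^2+1)/3)) c4 h 2 4 hq3 hh0 hh1 (by norm_num)
      rw [hKdef]
      linarith only [t1, b1, b2, b3]
    have hMh : 128*M*h^5 ≤ 128*M*h^2 :=
      mul_le_mul_of_nonneg_left hh52 (by linarith)
    have hMh2 : 64*M*h^5 ≤ 64*M*h^2 :=
      mul_le_mul_of_nonneg_left hh52 (by linarith)
    have hD2 : |(A - 2*B + Cc)^2 - QD^2| ≤ 128*M*(128*M+2*K)*h^5 := by
      have hfac : (A - 2*B + Cc)^2 - QD^2 = (A - 2*B + Cc - QD) * (A - 2*B + Cc + QD) := by ring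
      rw [hfac, abs_mul]
      have hplus : |A - 2*B + Cc + QD| ≤ (128*M + 2*K)*h^2 := by
        have t0 : A - 2*B + Cc + QD = (A - 2*B + Cc - QD) + 2*QD := by ring
        rw [t0]
        have t1 := abs_add_le (A - 2*B + Cc - QD) (2*QD)
        have t2 : |2*QD| = 2 * |QD| := by rw [abs_mul]; simp
        rw [t2] at t1
        linarith only [t1, hDb, hQDb, hMh]
      calc |A - 2*B + Cc - QD| * |A - 2*B + Cc + QD|
          ≤ (128*M*h^5) * ((128*M + 2*K)*h^2) :=
            mul_le_mul hDb hplus (abs_nonneg _)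
              (mul_nonneg (by linarith) (pow_pos hh0 5).le)
        _ ≤ 128*M*(128*M+2*K)*h^5 :=
            prod_pow_le (128*M) (128*M+2*K) h (by linarith) (by linarith) hh0 hh1
    have hE2 : |(Cc - A)^2 - QE^2| ≤ 64*M*(64*M+4*K)*h^5 := by
      have hfac : (Cc - A)^2 - QE^2 = (Cc - A - QE) * (Cc - A + QE) := by ring
      rw [hfac, abs_mul]
      have hplus : |Cc - A + QE| ≤ (64*M + 4*K)*h^2 := by
        have t0 : Cc - A + QE = (Cc - A - QE) + 2*QE := by ring
        rw [t0]
        have t1 := abs_add_le (Cc - A - QE) (2*QE)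
        have t2 : |2*QE| = 2 * |QE| := by rw [abs_mul]; simp
        rw [t2] at t1
        linarith only [t1, hEb, hQEb, hMh2]
      calc |Cc - A - QE| * |Cc - A + QE|
          ≤ (64*M*h^5) * ((64*M + 4*K)*h^2) :=
            mul_le_mul hEb hplus (abs_nonneg _)
              (mul_nonneg (by linarith) (pow_pos hh0 5).le)
        _ ≤ 64*M*(64*M+4*K)*h^5 :=
            prod_pow_le (64*M) (64*M+4*K) h (by linarith) (by linarith) hh0 hh1
    have hbr : 13/12*QD^2 + 1/4*QE^2 - (13/12 + lam^2)*c2^2*h^4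
        = h^5*(w0 + w1*h + w2*h^2 + w3*h^3) := by
      rw [hQDdef, hQEdef, hw0, hw1, hw2, hw3]; ring
    have hWb : |w0 + w1*h + w2*h^2 + w3*h^3| ≤ C1 := by
      have t1 : |w0 + w1*h + w2*h^2 + w3*h^3| ≤ |w0 + w1*h + w2*h^2| + |w3*h^3| := abs_add_le _ _
      have t2 := abs_add_three w0 (w1*h) (w2*h^2)
      have e1' : |w1*h| ≤ |w1| := by
        rw [abs_mul, abs_of_pos hh0]
        calc |w1| * h ≤ |w1| * 1 := mul_le_mul_of_nonneg_left hh1 (abs_nonneg w1)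
          _ = |w1| := mul_one _
      have e2' : |w2*h^2| ≤ |w2| := by
        rw [abs_mul, abs_pow, abs_of_pos hh0]
        calc |w2| * h^2 ≤ |w2| * 1 :=
              mul_le_mul_of_nonneg_left (pow_le_one₀ hh0.le hh1) (abs_nonneg w2)
          _ = |w2| := mul_one _
      have e3' : |w3*h^3| ≤ |w3| := by
        rw [abs_mul, abs_pow, abs_of_pos hh0]
        calc |w3| * h^3 ≤ |w3| * 1 :=
              mul_le_mul_of_nonneg_left (pow_le_one₀ hh0.le hh1) (abs_nonneg w3)
          _ = |w3| := mul_one _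
      rw [hC1def]
      linarith only [t1, t2, e1', e2', e3']
    have hbrb : |13/12*QD^2 + 1/4*QE^2 - (13/12 + lam^2)*c2^2*h^4| ≤ C1*h^5 := by
      rw [hbr, abs_mul, abs_pow, abs_of_pos hh0]
      calc h^5 * |w0 + w1*h + w2*h^2 + w3*h^3| ≤ h^5 * C1 :=
            mul_le_mul_of_nonneg_left hWb (by positivity)
        _ = C1*h^5 := by ring
    have main : 13/12*(A - 2*B + Cc)^2 + 1/4*(Cc - A)^2 - (13/12 + lam^2)*c2^2*h^4
        = 13/12*((A - 2*B + Cc)^2 - QD^2) + 1/4*((Cc - A)^2 - QE^2)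
          + (13/12*QD^2 + 1/4*QE^2 - (13/12 + lam^2)*c2^2*h^4) := by ring
    have habs := abs_add_three (13/12*((A - 2*B + Cc)^2 - QD^2)) (1/4*((Cc - A)^2 - QE^2))
      (13/12*QD^2 + 1/4*QE^2 - (13/12 + lam^2)*c2^2*h^4)
    have hm1 : |13/12*((A - 2*B + Cc)^2 - QD^2)| = 13/12 * |(A - 2*B + Cc)^2 - QD^2| := by
      rw [abs_mul]; norm_num
    have hm2 : |1/4*((Cc - A)^2 - QE^2)| = 1/4 * |(Cc - A)^2 - QE^2| := by
      rw [abs_mul]; norm_num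
    rw [hm1, hm2] at habs
    calc |13/12*(A - 2*B + Cc)^2 + 1/4*(Cc - A)^2 - (13/12 + lam^2)*c2^2*h^4|
        = |13/12*((A - 2*B + Cc)^2 - QD^2) + 1/4*((Cc - A)^2 - QE^2)
          + (13/12*QD^2 + 1/4*QE^2 - (13/12 + lam^2)*c2^2*h^4)| := by rw [main]
      _ ≤ 13/12 * |(A - 2*B + Cc)^2 - QD^2| + 1/4 * |(Cc - A)^2 - QE^2|
          + |13/12*QD^2 + 1/4*QE^2 - (13/12 + lam^2)*c2^2*h^4| := habs
      _ ≤ 13/12*(128*M*(128*M+2*K)*h^5) + 1/4*(64*M*(64*M+4*K)*h^5) + C1*h^5 := by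
          linarith only [hD2, hE2, hbrb]
      _ ≤ (13/12*(128*M*(128*M+2*K)) + 1/4*(64*M*(64*M+4*K)) + C1 + 1) * h^5 := by
          linarith only [pow_pos hh0 5]
  · have hpos : (0:ℝ) < 13/12 + lam^2 := by positivity
    exact mul_ne_zero (ne_of_gt hpos) (pow_ne_zero 2 h2)
end
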